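/- arXiv:1501.03150 — 8 statements merged into one kernel-verified Lean document; each statement's English description precedes it below -/
import Mathlib

section
/- Let G be a d×d real matrix whose spectral radius is strictly less than 1 and let Σ be a d×d symmetric positive definite matrix. Then the series ∑_{l=0}^∞ G^l Σ (Gᵀ)^l converges to a symmetric positive definite matrix; writing 𝒜 for its inverse and setting M = 𝒜(I−G)⁻¹ and N = 𝒜(I−G)⁻¹G, one has: M − N = 𝒜, M is invertible with M⁻¹N = G, M⁻¹(Mᵀ+N)M⁻ᵀ = Σ, and for every g ∈ ℝ^d the vector β = 𝒜(I−G)⁻¹g satisfies M⁻¹β = g. In particular 𝒜 = M − N is symmetric and positive definite. -/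
/-! Gelfand's formula turns `ρ(G) < r < 1` into `‖Gˡ‖ ≤ rˡ` for large `l`, so the series converges.
Its sum `S` is positive definite because its first term `Sg` is and the others are congruences of
`Sg`, and multiplying the series by `G` on the left and `Gᵀ` on the right shifts it, which gives the
Stein equation `G S Gᵀ = S - Sg`. As `1` is not an eigenvalue, `1 - G` is invertible and
`M⁻¹ = (1 - G) S`; then `M⁻¹ (Mᵀ + N) M⁻ᵀ = M⁻¹ + G M⁻ᵀ = (1 - G) S + G S (1 - Gᵀ) = S - G S Gᵀ`,
which is `Sg` by the Stein equation. -/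

open Matrix Filter
open scoped NNReal ENNReal

namespace spectrum

theorem spectralRadius_lt_of_forall_nnnorm_lt {𝕜 A : Type*} [NormedField 𝕜] [ProperSpace 𝕜]
    [NormedRing A] [NormedAlgebra 𝕜 A] [CompleteSpace A] {a : A} {r : ℝ≥0} (hr : 0 < r)
    (h : ∀ z ∈ spectrum 𝕜 a, ‖z‖₊ < r) : spectralRadius 𝕜 a < r := by
  rcases (spectrum 𝕜 a).eq_empty_or_nonempty with hempty | hne
  · simpa [spectralRadius, hempty] using hr
  · exact spectralRadius_lt_of_forall_lt_of_nonempty hne h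

theorem eventually_norm_pow_le_of_spectralRadius_lt {A : Type*} [NormedRing A]
    [NormedAlgebra ℂ A] [CompleteSpace A] {a : A} {r : ℝ≥0} (h : spectralRadius ℂ a < r) :
    ∀ᶠ n : ℕ in atTop, ‖a ^ n‖ ≤ r ^ n := by
  filter_upwards [(pow_nnnorm_pow_one_div_tendsto_nhds_spectralRadius a).eventually_lt_const h,
    eventually_gt_atTop 0] with n hn hn0
  have hpos : (0 : ℝ) < n := by exact_mod_cast hn0
  rw [one_div, ENNReal.rpow_inv_lt_iff hpos, ENNReal.rpow_natCast] at hn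
  exact_mod_cast hn.le

end spectrum

theorem mul_mul_eq_sub_of_hasSum_pow_mul_mul_pow {R : Type*} [Ring R] [TopologicalSpace R]
    [IsTopologicalRing R] [T2Space R] {a b c s : R}
    (h : HasSum (fun l : ℕ => a ^ l * c * b ^ l) s) : a * s * b = s - c := by
  have hshift := (hasSum_nat_add_iff' 1).mpr h
  simp only [Finset.range_one, Finset.sum_singleton, pow_zero, one_mul, mul_one] at hshift
  have hterm : (fun l : ℕ => a * (a ^ l * c * b ^ l) * b) =
      fun l => a ^ (l + 1) * c * b ^ (l + 1) := by
    funext l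
    rw [pow_succ', pow_succ]
    simp only [mul_assoc]
  exact ((h.mul_left a).mul_right b).unique (hterm ▸ hshift)

namespace Matrix

variable {n : Type*} [Fintype n]

open scoped ComplexOrder in
theorem PosSemidef.of_hasSum {𝕜 ι : Type*} [RCLike 𝕜] {f : ι → Matrix n n 𝕜}
    {S : Matrix n n 𝕜} (hf : HasSum f S) (h : ∀ i, (f i).PosSemidef) : S.PosSemidef := by
  refine posSemidef_iff_dotProduct_mulVec.mpr ⟨?_, fun x => ?_⟩
  · exact hf.matrix_conjTranspose.unique (by simpa only [(h _).isHermitian.eq] using hf)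
  · have hq : HasSum (fun i => star x ⬝ᵥ f i *ᵥ x) (star x ⬝ᵥ S *ᵥ x) :=
      hf.map (AddMonoidHom.mk' (fun A : Matrix n n 𝕜 => star x ⬝ᵥ A *ᵥ x)
        fun A B => by simp only [add_mulVec, dotProduct_add])
        (continuous_const.dotProduct (continuous_id.matrix_mulVec continuous_const))
    exact hq.nonneg fun i => (h i).dotProduct_mulVec_nonneg x

open scoped ComplexOrder in
theorem PosDef.of_hasSum_nat {𝕜 : Type*} [RCLike 𝕜] {f : ℕ → Matrix n n 𝕜}
    {S : Matrix n n 𝕜} (hf : HasSum f S) (h0 : (f 0).PosDef)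
    (h : ∀ l, (f (l + 1)).PosSemidef) : S.PosDef := by
  have htail : HasSum (fun l => f (l + 1)) (S - f 0) := by
    simpa only [Finset.sum_range_one] using (hasSum_nat_add_iff' 1).mpr hf
  simpa only [add_sub_cancel] using h0.add_posSemidef (PosSemidef.of_hasSum htail h)

theorem algebraMap_mem_spectrum_map_iff [DecidableEq n] {K L : Type*} [Field K] [Field L]
    [Algebra K L] (A : Matrix n n K) (r : K) :
    algebraMap K L r ∈ spectrum L (A.map (algebraMap K L)) ↔ r ∈ spectrum K A := by
  have hmap : algebraMap L (Matrix n n L) (algebraMap K L r) - A.map (algebraMap K L) =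
      (algebraMap K L).mapMatrix (algebraMap K (Matrix n n K) r - A) := by
    ext i j
    simp [algebraMap_matrix_apply, apply_ite (algebraMap K L)]
  simp only [spectrum.mem_iff, hmap, isUnit_iff_isUnit_det, ← RingHom.map_det, isUnit_map_iff]

section Frobenius

variable [DecidableEq n]

-- The Frobenius norm induces the product topology, in which the conclusion is stated.
attribute [local instance] frobeniusNormedAddCommGroup frobeniusNormedRing frobeniusNormedAlgebra

theorem summable_pow_mul_mul_transpose_pow {G : Matrix n n ℝ}
    (hG : ∀ μ ∈ spectrum ℂ (G.map (algebraMap ℝ ℂ)), ‖μ‖ < 1) (S : Matrix n n ℝ) :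
    Summable fun l : ℕ => G ^ l * S * Gᵀ ^ l := by
  have hρ : spectralRadius ℂ (G.map (algebraMap ℝ ℂ)) < 1 :=
    spectrum.spectralRadius_lt_of_forall_nnnorm_lt one_pos fun μ hμ => by exact_mod_cast hG μ hμ
  obtain ⟨r, hGr, hr1⟩ := ENNReal.lt_iff_exists_nnreal_btwn.mp hρ
  have hr1 : (r : ℝ) < 1 := by exact_mod_cast hr1
  have hpow : ∀ l, ‖G.map (algebraMap ℝ ℂ) ^ l‖ = ‖G ^ l‖ := fun l => by
    rw [← (algebraMap ℝ ℂ).mapMatrix_apply, ← map_pow]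
    exact congrArg NNReal.toReal (frobenius_nnnorm_map_eq _ _ Complex.nnnorm_real)
  refine .of_norm_bounded_eventually_nat ((summable_geometric_of_lt_one (r := (r : ℝ) ^ 2)
    (by positivity) (by nlinarith [r.2])).mul_left ‖S‖) ?_
  filter_upwards [spectrum.eventually_norm_pow_le_of_spectralRadius_lt hGr] with l hl
  rw [hpow] at hl
  calc ‖G ^ l * S * Gᵀ ^ l‖ ≤ ‖G ^ l‖ * ‖S‖ * ‖Gᵀ ^ l‖ :=
        (norm_mul_le _ _).trans (mul_le_mul_of_nonneg_right (norm_mul_le _ _) (norm_nonneg _))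
    _ = ‖G ^ l‖ * ‖S‖ * ‖G ^ l‖ := by rw [← transpose_pow, frobenius_norm_transpose]
    _ ≤ r ^ l * ‖S‖ * r ^ l := by gcongr
    _ = ‖S‖ * ((r : ℝ) ^ 2) ^ l := by ring

end Frobenius

section Splitting

variable [DecidableEq n] {R : Type*} [CommRing R]

theorem nonsing_inv_mul_transpose_add_mul_mul_transpose {M : Matrix n n R} (hM : IsUnit M.det)
    (G : Matrix n n R) : M⁻¹ * (Mᵀ + M * G) * M⁻¹ᵀ = M⁻¹ + G * M⁻¹ᵀ := by
  rw [mul_add, nonsing_inv_mul_cancel_left _ _ hM, add_mul, mul_assoc, ← transpose_mul,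
    nonsing_inv_mul _ hM, transpose_one, mul_one]

theorem one_sub_mul_add_mul_transpose_eq_of_stein {G S Sg : Matrix n n R} (hS : S.IsSymm)
    (hstein : G * S * Gᵀ = S - Sg) : (1 - G) * S + G * ((1 - G) * S)ᵀ = Sg := by
  rw [transpose_mul, hS.eq, transpose_sub, transpose_one]
  calc (1 - G) * S + G * (S * (1 - Gᵀ)) = S - G * S * Gᵀ := by noncomm_ring
    _ = Sg := by rw [hstein, sub_sub_cancel]

end Splitting

end Matrix

/-- If `G` is a `d × d` real matrix with spectral radius strictly less
than `1` (every complex eigenvalue has modulus `< 1`) and `Sg` is symmetric positive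
definite, then the series `∑ₗ Gˡ Sg (Gᵀ)ˡ` converges to a symmetric positive definite
matrix `S`; with `𝒜 := S⁻¹`, `M := 𝒜 (I - G)⁻¹` and `N := 𝒜 (I - G)⁻¹ G` one has
`M - N = 𝒜`, `M` invertible, `M⁻¹ N = G`, `M⁻¹ (Mᵀ + N) M⁻ᵀ = Sg`, and for every `g`,
the vector `β = 𝒜 (I - G)⁻¹ g` satisfies `M⁻¹ β = g`; in particular `𝒜 = M - N` is
symmetric positive definite. -/
theorem ar1_corresponds_to_matrix_splitting
    {d : ℕ} (G Sg : Matrix (Fin d) (Fin d) ℝ)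
    (hG : ∀ μ ∈ spectrum ℂ (G.map (algebraMap ℝ ℂ)), ‖μ‖ < 1)
    (hSg : Sg.PosDef) :
    ∃ S : Matrix (Fin d) (Fin d) ℝ,
      HasSum (fun l : ℕ => G ^ l * Sg * Gᵀ ^ l) S ∧ S.PosDef ∧ S.IsSymm ∧
      (let 𝒜 : Matrix (Fin d) (Fin d) ℝ := S⁻¹
       let M : Matrix (Fin d) (Fin d) ℝ := 𝒜 * (1 - G)⁻¹
       let N : Matrix (Fin d) (Fin d) ℝ := 𝒜 * (1 - G)⁻¹ * G
       M - N = 𝒜 ∧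
       IsUnit M.det ∧
       M⁻¹ * N = G ∧
       M⁻¹ * (Mᵀ + N) * M⁻¹ᵀ = Sg ∧
       (∀ g : Fin d → ℝ, M⁻¹ *ᵥ (𝒜 *ᵥ ((1 - G)⁻¹ *ᵥ g)) = g) ∧
       𝒜.IsSymm ∧ 𝒜.PosDef) := by
  obtain ⟨S, hS⟩ := summable_pow_mul_mul_transpose_pow hG Sg
  have hSpos : S.PosDef := PosDef.of_hasSum_nat hS (by simpa using hSg) fun l => by
    simpa [← transpose_pow] using hSg.posSemidef.mul_mul_conjTranspose_same (G ^ (l + 1))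
  have hSsymm : S.IsSymm := isHermitian_iff_isSymm.mp hSpos.isHermitian
  have hstein : G * S * Gᵀ = S - Sg := mul_mul_eq_sub_of_hasSum_pow_mul_mul_pow hS
  have h1G : IsUnit (1 - G).det := by
    have h1 : (1 : ℝ) ∉ spectrum ℝ G := fun h => by
      simpa using hG _ ((algebraMap_mem_spectrum_map_iff G 1).mpr h)
    exact (isUnit_iff_isUnit_det _).mp (by simpa using spectrum.notMem_iff.mp h1)
  have hSdet : IsUnit S.det := isUnit_iff_isUnit_det S |>.mp hSpos.isUnit
  refine ⟨S, hS, hSpos, hSsymm, ?_⟩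
  dsimp only
  set M := S⁻¹ * (1 - G)⁻¹
  have hM : IsUnit M.det := by
    simpa only [M, det_mul] using
      (isUnit_nonsing_inv_det S hSdet).mul (isUnit_nonsing_inv_det _ h1G)
  have hMinv : M⁻¹ = (1 - G) * S := by
    rw [Matrix.mul_inv_rev, nonsing_inv_nonsing_inv _ hSdet, nonsing_inv_nonsing_inv _ h1G]
  refine ⟨?_, hM, nonsing_inv_mul_cancel_left _ _ hM, ?_, fun g => ?_, ?_, hSpos.inv⟩
  · rw [← mul_one_sub, mul_assoc, nonsing_inv_mul _ h1G, mul_one]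
  · rw [nonsing_inv_mul_transpose_add_mul_mul_transpose hM, hMinv]
    exact one_sub_mul_add_mul_transpose_eq_of_stein hSsymm hstein
  · rw [mulVec_mulVec, mulVec_mulVec, mul_assoc, nonsing_inv_mul _ hM, one_mulVec]
  · exact isHermitian_iff_isSymm.mp hSpos.inv.isHermitian
end

section
/- Let G be a d×d real matrix whose spectral radius is strictly less than 1 and let Σ be a d×d symmetric positive definite matrix such that GΣ is symmetric. Then ∑_{l=0}^∞ G^l Σ (Gᵀ)^l = (I−G²)⁻¹Σ, and the matrices M = Σ⁻¹(I+G) and N = Σ⁻¹(I+G)G are both symmetric and satisfy: M − N = Σ⁻¹(I−G²), M is invertible with M⁻¹N = G, and M⁻¹(Mᵀ+N)M⁻ᵀ = Σ. Moreover for every g ∈ ℝ^d the vector β = Σ⁻¹(I+G)g satisfies M⁻¹β = g. -/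
/-!
The commutation `G Σ = Σ Gᵀ` turns `Gˡ Σ (Gᵀ)ˡ` into `(G²)ˡ Σ`, so the first claim is the Neumann
series of `G²`. It converges because the resolvent `z ↦ (1 - z a)⁻¹` of an element `a` of spectral
radius `< 1` is holomorphic on a disc of radius `> 1`, so its power series `∑ aˡ zˡ` converges
absolutely at `z = 1`. The same commutation makes every `Σ⁻¹ Gᵏ` symmetric, hence `M` and `N`.
The Neumann series also shows that `I - G² = (I + G)(I - G)` is invertible, so `M` is, and the
remaining identities are algebra: `N = M G` and `Mᵀ + N = M (I + G)`.
-/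

open Matrix

open scoped NNReal ENNReal in
theorem summable_norm_pow_of_spectralRadius_lt_one {A : Type*} [NormedRing A]
    [NormedAlgebra ℂ A] [CompleteSpace A] {a : A} (ha : spectralRadius ℂ a < 1) :
    Summable (‖a ^ ·‖) := by
  obtain ⟨r, hr1, hr⟩ := ENNReal.lt_iff_exists_nnreal_btwn.mp (ENNReal.one_lt_inv.mpr ha)
  have hr0 : 0 < r := by exact_mod_cast zero_lt_one.trans hr1
  let p : FormalMultilinearSeries ℂ ℂ A :=
    fun k => ContinuousMultilinearMap.mkPiRing ℂ (Fin k) (a ^ k)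
  have hp : (r : ℝ≥0∞) ≤ p.radius :=
    ((spectrum.hasFPowerSeriesOnBall_inverse_one_sub_smul ℂ a).exchange_radius
      ((spectrum.differentiableOn_inverse_one_sub_smul hr).hasFPowerSeriesOnBall hr0)).r_le
  simpa [p] using p.summable_norm_mul_pow (r := 1) (by exact_mod_cast hr1.trans_le hp)

theorem spectralRadius_lt_one_of_forall_norm_lt_one {A : Type*} [NormedRing A]
    [NormedAlgebra ℂ A] [CompleteSpace A] {a : A} (h : ∀ μ ∈ spectrum ℂ a, ‖μ‖ < 1) :
    spectralRadius ℂ a < 1 := by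
  rcases (spectrum ℂ a).eq_empty_or_nonempty with he | hne
  · simp [spectralRadius, he]
  · exact_mod_cast spectrum.spectralRadius_lt_of_forall_lt_of_nonempty hne (r := 1)
      (by simpa [← NNReal.coe_lt_coe] using h)

theorem spectrum.norm_lt_one_of_mem_pow {A : Type*} [Ring A] [Algebra ℂ A] {a : A}
    (h : ∀ μ ∈ spectrum ℂ a, ‖μ‖ < 1) {k : ℕ} (hk : 0 < k) :
    ∀ μ ∈ spectrum ℂ (a ^ k), ‖μ‖ < 1 := by
  rw [spectrum.map_pow_of_pos a hk]
  rintro _ ⟨μ, hμ, rfl⟩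
  rw [norm_pow]
  exact pow_lt_one₀ (norm_nonneg μ) (h μ hμ) hk.ne'

namespace Matrix

variable {n : Type*} [Fintype n]

theorem summable_pow_of_forall_norm_lt_one [DecidableEq n] {B : Matrix n n ℂ}
    (h : ∀ μ ∈ spectrum ℂ B, ‖μ‖ < 1) : Summable (B ^ ·) := by
  -- any matrix norm will do: they all induce the product topology used by `Summable`
  let _ := Matrix.linftyOpNormedRing (n := n) (α := ℂ)
  let _ := Matrix.linftyOpNormedAlgebra (n := n) (α := ℂ) (R := ℂ)
  exact (summable_norm_pow_of_spectralRadius_lt_one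
    (spectralRadius_lt_one_of_forall_norm_lt_one h)).of_norm

theorem summable_pow_of_forall_norm_lt_one_map [DecidableEq n] {A : Matrix n n ℝ}
    (h : ∀ μ ∈ spectrum ℂ (A.map (algebraMap ℝ ℂ)), ‖μ‖ < 1) : Summable (A ^ ·) := by
  have hB := summable_pow_of_forall_norm_lt_one h
  refine Pi.summable.mpr fun i => Pi.summable.mpr fun j => Complex.summable_ofReal.mp ?_
  convert Pi.summable.mp (Pi.summable.mp hB i) j using 2 with k
  rw [← Matrix.map_pow]
  rfl

variable {R : Type*} [CommRing R] {G S : Matrix n n R}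

theorem semiconjBy_transpose_of_isSymm_mul (hS : S.IsSymm) (hGS : (G * S).IsSymm) :
    SemiconjBy S Gᵀ G := by
  simpa [SemiconjBy, transpose_mul, hS.eq] using hGS.eq

variable [DecidableEq n]

theorem pow_mul_mul_transpose_pow (hS : S.IsSymm) (hGS : (G * S).IsSymm) (k : ℕ) :
    G ^ k * S * Gᵀ ^ k = (G ^ 2) ^ k * S := by
  rw [mul_assoc, ((semiconjBy_transpose_of_isSymm_mul hS hGS).pow_right k).eq, ← mul_assoc,
    ← pow_mul, ← pow_add, two_mul]

theorem isSymm_inv_mul_pow (hS : S.IsSymm) (hGS : (G * S).IsSymm) (k : ℕ) :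
    (S⁻¹ * G ^ k).IsSymm := by
  by_cases hdet : IsUnit S.det
  · have hcomm := ((semiconjBy_transpose_of_isSymm_mul hS hGS).pow_right k).eq
    rw [IsSymm, transpose_mul, transpose_nonsing_inv, hS.eq, transpose_pow]
    calc Gᵀ ^ k * S⁻¹ = S⁻¹ * (S * Gᵀ ^ k) * S⁻¹ := by
          rw [nonsing_inv_mul_cancel_left _ _ hdet]
      _ = S⁻¹ * G ^ k := by
          rw [hcomm, ← mul_assoc, mul_assoc, mul_nonsing_inv _ hdet, mul_one]
  · simp [nonsing_inv_apply_not_isUnit _ hdet]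

theorem isSymm_inv_mul_one_add_mul_pow (hS : S.IsSymm) (hGS : (G * S).IsSymm) (k : ℕ) :
    (S⁻¹ * (1 + G) * G ^ k).IsSymm := by
  have h : S⁻¹ * (1 + G) * G ^ k = S⁻¹ * G ^ k + S⁻¹ * G ^ (k + 1) := by
    rw [pow_succ', mul_add, add_mul, mul_one, mul_assoc]
  rw [h]
  exact (isSymm_inv_mul_pow hS hGS k).add (isSymm_inv_mul_pow hS hGS (k + 1))

theorem inv_mul_transpose_add_mul_mul_inv_transpose {M : Matrix n n R} (hM : M.IsSymm)
    (hdet : IsUnit M.det) : M⁻¹ * (Mᵀ + M * G) * M⁻¹ᵀ = (1 + G) * M⁻¹ := by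
  rw [hM.eq, transpose_nonsing_inv, hM.eq, ← mul_one_add, nonsing_inv_mul_cancel_left _ _ hdet]

end Matrix

/-- If `G` has spectral radius `< 1` and `Sg` is symmetric positive
definite with `G * Sg` symmetric, then `∑ₗ Gˡ Sg (Gᵀ)ˡ = (I - G²)⁻¹ Sg`, and the matrices
`M = Sg⁻¹ (I + G)` and `N = Sg⁻¹ (I + G) G` are both symmetric and satisfy
`M - N = Sg⁻¹ (I - G²)`, `M` invertible, `M⁻¹ N = G`, `M⁻¹ (Mᵀ + N) M⁻ᵀ = Sg`;
moreover for every `g`, the vector `β = Sg⁻¹ (I + G) g` satisfies `M⁻¹ β = g`. -/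
theorem ar1_symmetric_matrix_splitting
    {d : ℕ} (G Sg : Matrix (Fin d) (Fin d) ℝ)
    (hG : ∀ μ ∈ spectrum ℂ (G.map (algebraMap ℝ ℂ)), ‖μ‖ < 1)
    (hSg : Sg.PosDef)
    (hGSg : (G * Sg).IsSymm) :
    HasSum (fun l : ℕ => G ^ l * Sg * Gᵀ ^ l) ((1 - G ^ 2)⁻¹ * Sg) ∧
    (let M : Matrix (Fin d) (Fin d) ℝ := Sg⁻¹ * (1 + G)
     let N : Matrix (Fin d) (Fin d) ℝ := Sg⁻¹ * (1 + G) * G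
     M.IsSymm ∧ N.IsSymm ∧
     M - N = Sg⁻¹ * (1 - G ^ 2) ∧
     IsUnit M.det ∧
     M⁻¹ * N = G ∧
     M⁻¹ * (Mᵀ + N) * M⁻¹ᵀ = Sg ∧
     (∀ g : Fin d → ℝ, M⁻¹ *ᵥ (Sg⁻¹ *ᵥ ((1 + G) *ᵥ g)) = g)) := by
  have hS : Sg.IsSymm := isHermitian_iff_isSymm.mp hSg.isHermitian
  have hSdet : IsUnit Sg.det := (isUnit_iff_isUnit_det Sg).mp hSg.isUnit
  have hsum : Summable ((G ^ 2) ^ ·) := summable_pow_of_forall_norm_lt_one_map <| by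
    rw [Matrix.map_pow]
    exact spectrum.norm_lt_one_of_mem_pow hG two_pos
  have hinv := hsum.one_sub_mul_tsum_pow
  have hdet : IsUnit (1 + G).det := by
    have h : IsUnit ((1 + G) * (1 - G)) := by
      rw [show (1 + G) * (1 - G) = 1 - G ^ 2 by noncomm_ring]
      exact isUnit_of_mul_isUnit_left (hinv ▸ isUnit_one)
    exact (isUnit_iff_isUnit_det _).mp (isUnit_of_mul_isUnit_left h)
  have hMsymm := isSymm_inv_mul_one_add_mul_pow hS hGSg
  have hMdet : IsUnit (Sg⁻¹ * (1 + G)).det := by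
    rw [det_mul]
    exact (isUnit_nonsing_inv_det _ hSdet).mul hdet
  refine ⟨?_, ?_⟩
  · rw [inv_eq_right_inv hinv]
    simpa only [pow_mul_mul_transpose_pow hS hGSg] using hsum.hasSum.mul_right Sg
  dsimp only
  refine ⟨by simpa using hMsymm 0, by simpa using hMsymm 1, by noncomm_ring, hMdet,
    nonsing_inv_mul_cancel_left _ _ hMdet, ?_, fun g => ?_⟩
  · rw [inv_mul_transpose_add_mul_mul_inv_transpose (by simpa using hMsymm 0) hMdet,
      Matrix.mul_inv_rev, nonsing_inv_nonsing_inv _ hSdet, mul_nonsing_inv_cancel_left _ _ hdet]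
  · rw [mulVec_mulVec, mulVec_mulVec, mul_assoc, nonsing_inv_mul _ hMdet, one_mulVec]
end

section
/- Let A, M, N be d×d real symmetric matrices with M+N invertible, set 𝒜 = M − N, and let b, β ∈ ℝ^d. Then for all x, y ∈ ℝ^d the following identity holds: −yᵀAy + xᵀAx + 2bᵀ(y−x) − (Mx−Ny−β)ᵀ(M+N)⁻¹(Mx−Ny−β) + (My−Nx−β)ᵀ(M+N)⁻¹(My−Nx−β) = −yᵀ(A−𝒜)y + xᵀ(A−𝒜)x + 2(b−β)ᵀ(y−x). Consequently, if π(x) ∝ exp(−½xᵀAx + bᵀx) and q(x,y) ∝ exp(−½(My−Nx−β)ᵀ(M+N)⁻¹(My−Nx−β)) (each with an x- and y-independent normalizing constant), then the Metropolis–Hastings acceptance probability α(x,y) = min(1, π(y)q(y,x)/(π(x)q(x,y))) equals min(1, exp(−½yᵀ(A−𝒜)y + ½xᵀ(A−𝒜)x + (b−β)ᵀ(y−x))). -/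
open Matrix

section Aux
variable {d : ℕ}

lemma aux_symm_bilin (S : Matrix (Fin d) (Fin d) ℝ) (hS : S.IsSymm)
    (u v : Fin d → ℝ) : u ⬝ᵥ S *ᵥ v = v ⬝ᵥ S *ᵥ u := by
  rw [dotProduct_mulVec, ← mulVec_transpose, hS.eq, dotProduct_comm]

lemma aux_diff (S : Matrix (Fin d) (Fin d) ℝ) (hS : S.IsSymm)
    (u v : Fin d → ℝ) :
    v ⬝ᵥ S *ᵥ v - u ⬝ᵥ S *ᵥ u = (v - u) ⬝ᵥ S *ᵥ (v + u) := by
  rw [mulVec_add, sub_dotProduct, dotProduct_add, dotProduct_add,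
    aux_symm_bilin S hS u v]
  ring

lemma aux_cancel (P : Matrix (Fin d) (Fin d) ℝ) (hP : P.IsSymm)
    (hPd : IsUnit P.det) (a w : Fin d → ℝ) :
    (P *ᵥ a) ⬝ᵥ P⁻¹ *ᵥ w = a ⬝ᵥ w := by
  rw [dotProduct_mulVec, ← mulVec_transpose, Matrix.transpose_nonsing_inv,
    hP.eq, mulVec_mulVec, Matrix.nonsing_inv_mul P hPd, one_mulVec]

lemma aux_key {d : ℕ} (M N : Matrix (Fin d) (Fin d) ℝ)
    (hM : M.IsSymm) (hN : N.IsSymm) (hMN : IsUnit (M + N).det)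
    (β x y : Fin d → ℝ) :
    (M *ᵥ y - N *ᵥ x - β) ⬝ᵥ (M + N)⁻¹ *ᵥ (M *ᵥ y - N *ᵥ x - β)
      - (M *ᵥ x - N *ᵥ y - β) ⬝ᵥ (M + N)⁻¹ *ᵥ (M *ᵥ x - N *ᵥ y - β)
    = y ⬝ᵥ (M - N) *ᵥ y - x ⬝ᵥ (M - N) *ᵥ x - 2 * (β ⬝ᵥ (y - x)) := by
  have hPsymm : (M + N).IsSymm := hM.add hN
  have hSsymm : ((M + N)⁻¹).IsSymm := by
    rw [Matrix.IsSymm, Matrix.transpose_nonsing_inv, hPsymm.eq]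
  set u := M *ᵥ x - N *ᵥ y - β with hu
  set v := M *ᵥ y - N *ᵥ x - β with hv
  have hvu : v - u = (M + N) *ᵥ (y - x) := by
    rw [hu, hv, add_mulVec, mulVec_sub, mulVec_sub]
    abel
  have hvpu : v + u = (M - N) *ᵥ (x + y) - 2 • β := by
    rw [hu, hv, sub_mulVec, mulVec_add, mulVec_add]
    module
  rw [aux_diff _ hSsymm, hvu, hvpu, aux_cancel _ hPsymm hMN]
  have hsym : x ⬝ᵥ (M - N) *ᵥ y = y ⬝ᵥ (M - N) *ᵥ x :=
    aux_symm_bilin _ (hM.sub hN) x y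
  rw [dotProduct_sub, sub_dotProduct, mulVec_add, dotProduct_add,
    dotProduct_add, dotProduct_smul, sub_dotProduct, dotProduct_sub,
    hsym, dotProduct_comm β y, dotProduct_comm β x]
  ring_nf

end Aux

/-- For symmetric `A, M, N` with `M + N` invertible, `𝒜 = M - N`,
and any vectors `b, β, x, y`, the quadratic-form identity holds; consequently, for
target density `q(x,y) ∝ exp(-½ (My - Nx - β)ᵀ (M+N)⁻¹ (My - Nx - β))`, the Metropolis–Hastings
acceptance probability `min(1, π(y)q(y,x)/(π(x)q(x,y)))` equals
`min(1, exp(-½ yᵀ(A-𝒜)y + ½ xᵀ(A-𝒜)x + (b-β)ᵀ(y-x)))`. -/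
theorem mh_acceptance_matrix_splitting
    {d : ℕ} (A M N : Matrix (Fin d) (Fin d) ℝ)
    (hA : A.IsSymm) (hM : M.IsSymm) (hN : N.IsSymm)
    (hMN : IsUnit (M + N).det)
    (b β : Fin d → ℝ) :
    (∀ x y : Fin d → ℝ,
      - y ⬝ᵥ A *ᵥ y + x ⬝ᵥ A *ᵥ x + 2 * (b ⬝ᵥ (y - x))
        - (M *ᵥ x - N *ᵥ y - β) ⬝ᵥ (M + N)⁻¹ *ᵥ (M *ᵥ x - N *ᵥ y - β)
        + (M *ᵥ y - N *ᵥ x - β) ⬝ᵥ (M + N)⁻¹ *ᵥ (M *ᵥ y - N *ᵥ x - β)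
      = - y ⬝ᵥ (A - (M - N)) *ᵥ y + x ⬝ᵥ (A - (M - N)) *ᵥ x
        + 2 * ((b - β) ⬝ᵥ (y - x))) ∧
    (∀ cπ cq : ℝ, 0 < cπ → 0 < cq →
      ∀ x y : Fin d → ℝ,
      (let π : (Fin d → ℝ) → ℝ :=
        fun z => cπ * Real.exp (-(1/2) * (z ⬝ᵥ A *ᵥ z) + b ⬝ᵥ z)
       let q : (Fin d → ℝ) → (Fin d → ℝ) → ℝ :=
        fun z w => cq * Real.exp (-(1/2) *
          ((M *ᵥ w - N *ᵥ z - β) ⬝ᵥ (M + N)⁻¹ *ᵥ (M *ᵥ w - N *ᵥ z - β)))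
       min 1 (π y * q y x / (π x * q x y))
        = min 1 (Real.exp (-(1/2) * (y ⬝ᵥ (A - (M - N)) *ᵥ y)
            + (1/2) * (x ⬝ᵥ (A - (M - N)) *ᵥ x) + (b - β) ⬝ᵥ (y - x))))) := by
  have key : ∀ x y : Fin d → ℝ,
      - y ⬝ᵥ A *ᵥ y + x ⬝ᵥ A *ᵥ x + 2 * (b ⬝ᵥ (y - x))
        - (M *ᵥ x - N *ᵥ y - β) ⬝ᵥ (M + N)⁻¹ *ᵥ (M *ᵥ x - N *ᵥ y - β)
        + (M *ᵥ y - N *ᵥ x - β) ⬝ᵥ (M + N)⁻¹ *ᵥ (M *ᵥ y - N *ᵥ x - β)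
      = - y ⬝ᵥ (A - (M - N)) *ᵥ y + x ⬝ᵥ (A - (M - N)) *ᵥ x
        + 2 * ((b - β) ⬝ᵥ (y - x)) := by
    intro x y
    have hd := aux_key M N hM hN hMN β x y
    have e1 : (A - (M - N)) *ᵥ y = A *ᵥ y - (M - N) *ᵥ y := sub_mulVec _ _ _
    have e2 : (A - (M - N)) *ᵥ x = A *ᵥ x - (M - N) *ᵥ x := sub_mulVec _ _ _
    rw [e1, e2]
    simp only [neg_dotProduct, dotProduct_sub, sub_dotProduct] at hd ⊢
    linarith
  refine ⟨key, ?_⟩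
  intro cπ cq hcπ hcq x y
  simp only
  congr 1
  rw [mul_mul_mul_comm, mul_mul_mul_comm cπ _ cq, ← Real.exp_add,
    ← Real.exp_add, mul_div_mul_left _ _ (mul_pos hcπ hcq).ne',
    ← Real.exp_sub]
  congr 1
  have hkey := key x y
  have e1 : (A - (M - N)) *ᵥ y = A *ᵥ y - (M - N) *ᵥ y := sub_mulVec _ _ _
  have e2 : (A - (M - N)) *ᵥ x = A *ᵥ x - (M - N) *ᵥ x := sub_mulVec _ _ _
  rw [e1, e2] at hkey ⊢
  simp only [neg_dotProduct, dotProduct_sub, sub_dotProduct] at hkey ⊢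
  linarith
end

section
/- Let A and V be d×d symmetric positive definite matrices, θ ∈ [0,1], h > 0, b ∈ ℝ^d; set B = V^{1/2}AV^{1/2}, W = I + (θ−½)(h/2)B, and W̃ = I + (θ−½)(h/2)AV, and assume I + (θh/2)B and W are invertible. Define M = (2/h)V^{−1/2}W(I + (θh/2)B)V^{−1/2}, N = (2/h)V^{−1/2}W(I − ((1−θ)h/2)B)V^{−1/2}, 𝒜 = V^{−1/2}WBV^{−1/2}, β = V^{−1/2}WV^{1/2}b. Then: M − N = 𝒜 = W̃A; β = W̃b; M is invertible with M⁻¹N = G := (I + (θh/2)VA)⁻¹(I − ((1−θ)h/2)VA); M⁻¹β = (h/2)(I + (θh/2)VA)⁻¹Vb; M⁻¹(Mᵀ+N)M⁻ᵀ = Σ := h(I + (θh/2)VA)⁻¹V(I + (θh/2)AV)⁻¹; and GΣ is symmetric. -/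
open Matrix

open scoped ComplexOrder in
/-- The positive semidefinite square root, as `Matrix.PosSemidef.sqrt` was defined in Mathlib
(December 2024); it has since been removed from Mathlib. -/
noncomputable def Matrix.PosSemidef.sqrt {n 𝕜 : Type*} [Fintype n] [RCLike 𝕜] [DecidableEq n]
    {A : Matrix n n 𝕜} (hA : A.PosSemidef) : Matrix n n 𝕜 :=
  hA.1.eigenvectorUnitary.1 * diagonal ((↑) ∘ Real.sqrt ∘ hA.1.eigenvalues) *
    (star hA.1.eigenvectorUnitary : Matrix n n 𝕜)

/-!
Conjugation by `S = V^{1/2}` carries `B = S A S` to `S B S⁻¹ = V A` and `S⁻¹ B S = A V`, so every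
matrix in the statement is a congruence `S⁻¹ X S⁻¹` (or a conjugate) of a polynomial in the
symmetric matrix `B`, and such polynomials commute. The iteration matrix `M⁻¹ N` and the covariance
`M⁻¹ (Mᵀ + N) M⁻ᵀ` of a splitting transform covariantly under congruence, which reduces the
theorem to `M₀ = (2/h) W P`, `N₀ = (2/h) W Q` with `P = I + (θh/2) B`, `Q = I - ((1-θ)h/2) B`.
There `M₀⁻¹ N₀ = P⁻¹ Q`, and since `P + Q = 2 W` we get `M₀ᵀ + N₀ = (4/h) W²`, so the factors `W`
cancel in the covariance, which becomes `h P⁻²`.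
-/

open scoped ComplexOrder

namespace Matrix.PosSemidef

variable {n 𝕜 : Type*} [Fintype n] [RCLike 𝕜] [DecidableEq n] {A : Matrix n n 𝕜}

theorem sqrt_mul_self (hA : A.PosSemidef) : hA.sqrt * hA.sqrt = A := by
  set U : Matrix n n 𝕜 := hA.1.eigenvectorUnitary.1
  have hU : star U * U = 1 := Matrix.UnitaryGroup.star_mul_self _
  conv_rhs => rw [hA.1.spectral_theorem, Unitary.conjStarAlgAut_apply]
  calc hA.sqrt * hA.sqrt
      = U * (diagonal ((↑) ∘ Real.sqrt ∘ hA.1.eigenvalues) * (star U * U) *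
          diagonal ((↑) ∘ Real.sqrt ∘ hA.1.eigenvalues)) * star U := by
        simp only [PosSemidef.sqrt, U, Matrix.mul_assoc]
    _ = U * diagonal ((↑) ∘ hA.1.eigenvalues) * star U := by
        rw [hU, Matrix.mul_one, diagonal_mul_diagonal]
        congr 3
        ext i
        simp [← RCLike.ofReal_mul, Real.mul_self_sqrt (hA.eigenvalues_nonneg i)]

theorem isHermitian_sqrt (hA : A.PosSemidef) : hA.sqrt.IsHermitian := by
  rw [IsHermitian, PosSemidef.sqrt, conjTranspose_mul, conjTranspose_mul, star_eq_conjTranspose,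
    conjTranspose_conjTranspose, diagonal_conjTranspose, Matrix.mul_assoc]
  congr 3
  ext i
  simp

end Matrix.PosSemidef

theorem Matrix.PosDef.isUnit_det_sqrt {n 𝕜 : Type*} [Fintype n] [RCLike 𝕜] [DecidableEq n]
    {A : Matrix n n 𝕜} (hA : A.PosDef) : IsUnit hA.posSemidef.sqrt.det := by
  have hdet : hA.posSemidef.sqrt.det * hA.posSemidef.sqrt.det = A.det := by
    rw [← det_mul, hA.posSemidef.sqrt_mul_self]
  have hA' : IsUnit A.det := hA.det_pos.ne'.isUnit
  rw [← hdet] at hA'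
  exact isUnit_of_mul_isUnit_left hA'

namespace Matrix

variable {n R : Type*} [Fintype n] [CommRing R]

theorem IsSymm.mul_of_commute {X Y : Matrix n n R} (hX : X.IsSymm) (hY : Y.IsSymm)
    (hXY : Commute X Y) : (X * Y).IsSymm := by
  rw [IsSymm, transpose_mul, hX.eq, hY.eq, hXY.eq]

theorem IsSymm.mul_mul_transpose {X : Matrix n n R} (hX : X.IsSymm) (S : Matrix n n R) :
    (S * X * Sᵀ).IsSymm := by
  rw [IsSymm, transpose_mul, transpose_mul, transpose_transpose, hX.eq, Matrix.mul_assoc]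

theorem smul_mul_mul_eq_mul_smul_mul (c : R) (T X : Matrix n n R) :
    c • (T * X * T) = T * (c • X) * T := by
  rw [mul_smul_comm, smul_mul_assoc]

variable [DecidableEq n]

theorem commute_nonsing_inv_left {P Q : Matrix n n R} (hP : IsUnit P.det) (h : Commute P Q) :
    Commute P⁻¹ Q := by
  have hinv := Commute.units_inv_left (u := nonsingInvUnit P hP) h
  rwa [coe_units_inv] at hinv

theorem commute_one_add_smul (a c : R) (X : Matrix n n R) :
    Commute (1 + a • X) (1 + c • X) :=
  (Commute.one_left _).add_left
    ((Commute.one_right _).add_right ((Commute.refl X).smul_left a |>.smul_right c))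

theorem commute_one_add_smul_one_sub_smul (a c : R) (X : Matrix n n R) :
    Commute (1 + a • X) (1 - c • X) := by
  simpa only [neg_smul, ← sub_eq_add_neg] using commute_one_add_smul a (-c) X

theorem conj_one_add_smul {S : Matrix n n R} (hS : IsUnit S.det) (c : R) (X : Matrix n n R) :
    S * (1 + c • X) * S⁻¹ = 1 + c • (S * X * S⁻¹) := by
  rw [Matrix.mul_add, Matrix.add_mul, Matrix.mul_one, mul_nonsing_inv _ hS, mul_smul_comm,
    smul_mul_assoc]

theorem conj_one_sub_smul {S : Matrix n n R} (hS : IsUnit S.det) (c : R) (X : Matrix n n R) :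
    S * (1 - c • X) * S⁻¹ = 1 - c • (S * X * S⁻¹) := by
  rw [Matrix.mul_sub, Matrix.sub_mul, Matrix.mul_one, mul_nonsing_inv _ hS, mul_smul_comm,
    smul_mul_assoc]

theorem conj_inv {S : Matrix n n R} (hS : IsUnit S.det) (X : Matrix n n R) :
    (S * X * S⁻¹)⁻¹ = S * X⁻¹ * S⁻¹ := by
  rw [mul_inv_rev, mul_inv_rev, nonsing_inv_nonsing_inv _ hS, Matrix.mul_assoc]

/-- Covariance of the AR(1) process attached to the splitting `M - N`. -/
noncomputable def splittingCov (M N : Matrix n n R) : Matrix n n R := M⁻¹ * (Mᵀ + N) * M⁻¹ᵀ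

theorem inv_mul_congruence {T : Matrix n n R} (hT : IsUnit T.det) (M N : Matrix n n R) :
    (T * M * T)⁻¹ * (T * N * T) = T⁻¹ * (M⁻¹ * N) * T := by
  simp only [mul_inv_rev, Matrix.mul_assoc, nonsing_inv_mul_cancel_left _ _ hT]

theorem splittingCov_congruence {T : Matrix n n R} (hT : IsUnit T.det) (hTs : T.IsSymm)
    (M N : Matrix n n R) :
    splittingCov (T * M * T) (T * N * T) = T⁻¹ * splittingCov M N * T⁻¹ := by
  have hTi : T⁻¹ᵀ = T⁻¹ := by rw [transpose_nonsing_inv, hTs.eq]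
  simp only [splittingCov, mul_inv_rev, transpose_mul, hTs.eq, hTi, ← Matrix.mul_add,
    ← Matrix.add_mul, Matrix.mul_assoc, nonsing_inv_mul_cancel_left _ _ hT,
    mul_nonsing_inv_cancel_left _ _ hT]

variable {K : Type*} [Field K]

theorem inv_smul_of_ne_zero {c : K} (hc : c ≠ 0) (X : Matrix n n K) : (c • X)⁻¹ = c⁻¹ • X⁻¹ := by
  by_cases hX : IsUnit X.det
  · exact inv_eq_left_inv (by simp [smul_smul, hc, nonsing_inv_mul _ hX])
  · have hcX : ¬IsUnit (c • X).det := by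
      rwa [det_smul, IsUnit.mul_iff, not_and_or, or_iff_right (not_not.mpr (hc.isUnit.pow _))]
    rw [nonsing_inv_apply_not_isUnit _ hX, nonsing_inv_apply_not_isUnit _ hcX, smul_zero]

theorem inv_smul_mul_mul_smul_mul {c : K} (hc : c ≠ 0) {W : Matrix n n K} (hW : IsUnit W.det)
    (P Q : Matrix n n K) : (c • (W * P))⁻¹ * (c • (W * Q)) = P⁻¹ * Q := by
  rw [inv_smul_of_ne_zero hc, mul_inv_rev, smul_mul_smul_comm, inv_mul_cancel₀ hc, one_smul,
    Matrix.mul_assoc, nonsing_inv_mul_cancel_left _ _ hW]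

theorem splittingCov_smul_mul {c : K} (hc : c ≠ 0) {W P Q : Matrix n n K} (hW : IsUnit W.det)
    (hP : IsUnit P.det) (hWs : W.IsSymm) (hPs : P.IsSymm) (hPW : Commute P W)
    (hPQ : P + Q = (2 : K) • W) :
    splittingCov (c • (W * P)) (c • (W * Q)) = (2 / c) • (P⁻¹ * P⁻¹) := by
  have hMs : (c • (W * P))ᵀ = c • (W * P) := by
    rw [transpose_smul, transpose_mul, hWs.eq, hPs.eq, hPW.eq]
  have hMN : c • (W * P) + c • (W * Q) = (2 * c) • (W * W) := by
    rw [← smul_add, ← Matrix.mul_add, hPQ, mul_smul_comm, smul_smul, mul_comm]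
  have hcancel : P⁻¹ * W⁻¹ * (W * W) * (P⁻¹ * W⁻¹) = P⁻¹ * P⁻¹ := by
    rw [Matrix.mul_assoc P⁻¹, nonsing_inv_mul_cancel_left _ _ hW, Matrix.mul_assoc,
      ← Matrix.mul_assoc W, ← (commute_nonsing_inv_left hP hPW).eq, Matrix.mul_assoc,
      mul_nonsing_inv _ hW, Matrix.mul_one]
  rw [splittingCov, transpose_nonsing_inv, hMs, hMN, inv_smul_of_ne_zero hc, mul_inv_rev,
    smul_mul_smul_comm, smul_mul_smul_comm, hcancel]
  congr 1
  field_simp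

end Matrix

section LangevinSplitting

variable {n K : Type*} [DecidableEq n] [Field K]

theorem langevin_add_eq [NeZero (2 : K)] (θ h : K) (B : Matrix n n K) :
    (1 + (θ * h / 2) • B) + (1 - ((1 - θ) * h / 2) • B) =
      (2 : K) • (1 + ((θ - 1 / 2) * (h / 2)) • B) := by
  match_scalars <;> field_simp <;> ring

variable [Fintype n]

theorem langevin_smul_sub_smul [NeZero (2 : K)] (θ : K) {h : K} (hh : h ≠ 0)
    (T W B : Matrix n n K) :
    (2 / h) • (T * (W * (1 + (θ * h / 2) • B)) * T) -
      (2 / h) • (T * (W * (1 - ((1 - θ) * h / 2) • B)) * T) = T * (W * B) * T := by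
  have hPQ : (1 + (θ * h / 2) • B) - (1 - ((1 - θ) * h / 2) • B) = (h / 2) • B := by module
  rw [← smul_sub, ← Matrix.sub_mul, ← Matrix.mul_sub, ← Matrix.mul_sub, hPQ, mul_smul_comm,
    mul_smul_comm, smul_mul_assoc, smul_smul, div_mul_div_cancel₀ hh, div_self two_ne_zero,
    one_smul]

theorem isSymm_inv_mul_mul_inv_mul_inv {X : Matrix n n K} (hX : X.IsSymm) {a : K}
    (hP : IsUnit (1 + a • X).det) (c : K) :
    ((1 + a • X)⁻¹ * (1 - c • X) * ((1 + a • X)⁻¹ * (1 + a • X)⁻¹)).IsSymm := by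
  have hPi : (1 + a • X)⁻¹.IsSymm := (isSymm_one.add (hX.smul a)).inv
  have hQ : (1 - c • X).IsSymm := isSymm_one.sub (hX.smul c)
  have hPQ : Commute (1 + a • X)⁻¹ (1 - c • X) :=
    commute_nonsing_inv_left hP (commute_one_add_smul_one_sub_smul a c X)
  exact (hPi.mul_of_commute hQ hPQ).mul_of_commute (hPi.mul_of_commute hPi (Commute.refl _))
    (((Commute.refl _).mul_right (Commute.refl _)).mul_left (hPQ.symm.mul_right hPQ.symm))

variable {A V S : Matrix n n K}

theorem one_add_smul_mul_eq_conj (hS : IsUnit S.det) (hSV : S * S = V) (c : K) :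
    1 + c • (V * A) = S * (1 + c • (S * A * S)) * S⁻¹ := by
  rw [conj_one_add_smul hS, ← hSV]
  simp only [Matrix.mul_assoc, mul_nonsing_inv _ hS, Matrix.mul_one]

theorem one_sub_smul_mul_eq_conj (hS : IsUnit S.det) (hSV : S * S = V) (c : K) :
    1 - c • (V * A) = S * (1 - c • (S * A * S)) * S⁻¹ := by
  rw [conj_one_sub_smul hS, ← hSV]
  simp only [Matrix.mul_assoc, mul_nonsing_inv _ hS, Matrix.mul_one]

theorem inv_mul_one_add_smul_mul_eq (hS : IsUnit S.det) (hSV : S * S = V) (c : K) :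
    S⁻¹ * ((1 + c • (S * A * S)) * S) = 1 + c • (A * V) := by
  have hconj := conj_one_add_smul (isUnit_nonsing_inv_det S hS) c (S * A * S)
  rw [nonsing_inv_nonsing_inv S hS] at hconj
  rw [← Matrix.mul_assoc, hconj, ← hSV]
  simp only [Matrix.mul_assoc, nonsing_inv_mul_cancel_left _ _ hS]

theorem conj_mul_eq_one_add_smul_mul (hS : IsUnit S.det) (hSV : S * S = V) (c : K) :
    S⁻¹ * ((1 + c • (S * A * S)) * (S * A * S)) * S⁻¹ = (1 + c • (A * V)) * A := by
  rw [← inv_mul_one_add_smul_mul_eq hS hSV]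
  simp only [Matrix.mul_assoc, mul_nonsing_inv _ hS, Matrix.mul_one]

theorem inv_mul_sub_eq_conj (hS : IsUnit S.det) (hSV : S * S = V) (a c : K) :
    (1 + a • (V * A))⁻¹ * (1 - c • (V * A)) =
      S * ((1 + a • (S * A * S))⁻¹ * (1 - c • (S * A * S))) * S⁻¹ := by
  rw [one_add_smul_mul_eq_conj hS hSV, one_sub_smul_mul_eq_conj hS hSV, conj_inv hS]
  simp only [Matrix.mul_assoc, nonsing_inv_mul_cancel_left _ _ hS]

theorem inv_mul_mul_inv_eq_congruence (hS : IsUnit S.det) (hSV : S * S = V) (a : K) :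
    (1 + a • (V * A))⁻¹ * V * (1 + a • (A * V))⁻¹ =
      S * ((1 + a • (S * A * S))⁻¹ * (1 + a • (S * A * S))⁻¹) * S := by
  rw [one_add_smul_mul_eq_conj hS hSV, ← inv_mul_one_add_smul_mul_eq hS hSV, conj_inv hS,
    Matrix.mul_inv_rev, Matrix.mul_inv_rev, nonsing_inv_nonsing_inv _ hS, ← hSV]
  simp only [Matrix.mul_assoc, nonsing_inv_mul_cancel_left _ _ hS,
    mul_nonsing_inv_cancel_left _ _ hS]

theorem inv_smul_congruence_mul_eq (hS : IsUnit S.det) (hSV : S * S = V) {c : K} (hc : c ≠ 0)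
    {W : Matrix n n K} (hW : IsUnit W.det) (a : K) :
    (c • (S⁻¹ * (W * (1 + a • (S * A * S))) * S⁻¹))⁻¹ * (S⁻¹ * (W * S)) =
      c⁻¹ • ((1 + a • (V * A))⁻¹ * V) := by
  rw [inv_smul_of_ne_zero hc, Matrix.mul_inv_rev, Matrix.mul_inv_rev, Matrix.mul_inv_rev,
    nonsing_inv_nonsing_inv _ hS, one_add_smul_mul_eq_conj hS hSV, conj_inv hS, ← hSV]
  simp only [smul_mul_assoc, Matrix.mul_assoc, mul_nonsing_inv_cancel_left _ _ hS,
    nonsing_inv_mul_cancel_left _ _ hS, nonsing_inv_mul_cancel_left _ _ hW]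

end LangevinSplitting

theorem general_langevin_matrix_splitting_general
    {d : ℕ} (A V : Matrix (Fin d) (Fin d) ℝ) (hA : A.PosDef) (hV : V.PosDef)
    (θ h : ℝ) (hh : 0 < h) (b : Fin d → ℝ) :
    (let sqrtV : Matrix (Fin d) (Fin d) ℝ := hV.posSemidef.sqrt
     let B : Matrix (Fin d) (Fin d) ℝ := sqrtV * A * sqrtV
     let W : Matrix (Fin d) (Fin d) ℝ := 1 + ((θ - 1/2) * (h/2)) • B
     let Wt : Matrix (Fin d) (Fin d) ℝ := 1 + ((θ - 1/2) * (h/2)) • (A * V)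
     ∀ _ : IsUnit (1 + (θ * h / 2) • B).det,
     ∀ _ : IsUnit W.det,
     (let M : Matrix (Fin d) (Fin d) ℝ :=
        (2 / h) • (sqrtV⁻¹ * (W * (1 + (θ * h / 2) • B)) * sqrtV⁻¹)
      let N : Matrix (Fin d) (Fin d) ℝ :=
        (2 / h) • (sqrtV⁻¹ * (W * (1 - ((1 - θ) * h / 2) • B)) * sqrtV⁻¹)
      let 𝒜 : Matrix (Fin d) (Fin d) ℝ := sqrtV⁻¹ * (W * B) * sqrtV⁻¹
      let β : Fin d → ℝ := (sqrtV⁻¹ * (W * sqrtV)) *ᵥ b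
      let G : Matrix (Fin d) (Fin d) ℝ :=
        (1 + (θ * h / 2) • (V * A))⁻¹ * (1 - ((1 - θ) * h / 2) • (V * A))
      let Sig : Matrix (Fin d) (Fin d) ℝ :=
        h • ((1 + (θ * h / 2) • (V * A))⁻¹ * V * (1 + (θ * h / 2) • (A * V))⁻¹)
      M - N = 𝒜 ∧
      𝒜 = Wt * A ∧
      β = Wt *ᵥ b ∧
      IsUnit M.det ∧
      M⁻¹ * N = G ∧
      M⁻¹ *ᵥ β = (h / 2) • ((1 + (θ * h / 2) • (V * A))⁻¹ *ᵥ (V *ᵥ b)) ∧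
      M⁻¹ * (Mᵀ + N) * M⁻¹ᵀ = Sig ∧
      (G * Sig).IsSymm)) := by
  intro S B W Wt hP hW M N 𝒜 β G Sig
  have hSV : S * S = V := hV.posSemidef.sqrt_mul_self
  have hS : IsUnit S.det := hV.isUnit_det_sqrt
  have hSs : S.IsSymm := isHermitian_iff_isSymm.mp hV.posSemidef.isHermitian_sqrt
  have hSi : IsUnit S⁻¹.det := isUnit_nonsing_inv_det S hS
  have hSii : S⁻¹⁻¹ = S := nonsing_inv_nonsing_inv S hS
  have hB : B.IsSymm := by
    simpa only [hSs.eq] using (isHermitian_iff_isSymm.mp hA.isHermitian).mul_mul_transpose S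
  have hc : 2 / h ≠ 0 := div_ne_zero two_ne_zero hh.ne'
  have hM : M = S⁻¹ * ((2 / h) • (W * (1 + (θ * h / 2) • B))) * S⁻¹ :=
    smul_mul_mul_eq_mul_smul_mul _ _ _
  have hN : N = S⁻¹ * ((2 / h) • (W * (1 - ((1 - θ) * h / 2) • B))) * S⁻¹ :=
    smul_mul_mul_eq_mul_smul_mul _ _ _
  have hG : G = S * ((1 + (θ * h / 2) • B)⁻¹ * (1 - ((1 - θ) * h / 2) • B)) * S⁻¹ :=
    inv_mul_sub_eq_conj hS hSV _ _
  have hSig : Sig = S * (h • ((1 + (θ * h / 2) • B)⁻¹ * (1 + (θ * h / 2) • B)⁻¹)) * S := by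
    rw [← smul_mul_mul_eq_mul_smul_mul, ← inv_mul_mul_inv_eq_congruence hS hSV]
  refine ⟨langevin_smul_sub_smul θ hh.ne' _ _ _, conj_mul_eq_one_add_smul_mul hS hSV _,
    congrArg (· *ᵥ b) (inv_mul_one_add_smul_mul_eq hS hSV _), ?_, ?_, ?_, ?_, ?_⟩
  · rw [hM, det_mul, det_mul, det_smul, det_mul]
    exact (hSi.mul ((hc.isUnit.pow _).mul (hW.mul hP))).mul hSi
  · rw [hM, hN, inv_mul_congruence hSi, hSii, inv_smul_mul_mul_smul_mul hc hW, hG]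
  · rw [mulVec_mulVec, inv_smul_congruence_mul_eq hS hSV hc hW, inv_div, smul_mulVec,
      ← mulVec_mulVec]
  · change splittingCov M N = Sig
    rw [hM, hN, splittingCov_congruence hSi hSs.inv, hSii, splittingCov_smul_mul hc hW hP
      (isSymm_one.add (hB.smul _)) (isSymm_one.add (hB.smul _)) (commute_one_add_smul _ _ _)
      (langevin_add_eq θ h B), div_div_cancel₀ two_ne_zero, hSig]
  · rw [hG, hSig, mul_smul_comm, smul_mul_assoc, mul_smul_comm]
    refine IsSymm.smul ?_ h
    simpa only [Matrix.mul_assoc, nonsing_inv_mul_cancel_left _ _ hS, hSs.eq] using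
      (isSymm_inv_mul_mul_inv_mul_inv hB hP ((1 - θ) * h / 2)).mul_mul_transpose S

/-- (Theorem: the general discretized Langevin proposal corresponds to
a matrix splitting.)  With `B = V^{1/2} A V^{1/2}`, `W = I + (θ-½)(h/2)B`,
`W̃ = I + (θ-½)(h/2)AV`, the matrices `M = (2/h)V^{-1/2}W(I + (θh/2)B)V^{-1/2}`,
`N = (2/h)V^{-1/2}W(I - ((1-θ)h/2)B)V^{-1/2}`, `𝒜 = V^{-1/2}WBV^{-1/2}`,
`β = V^{-1/2}WV^{1/2}b` satisfy the listed identities, and `GΣ` is symmetric. -/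
theorem general_langevin_matrix_splitting
    {d : ℕ} (A V : Matrix (Fin d) (Fin d) ℝ) (hA : A.PosDef) (hV : V.PosDef)
    (θ h : ℝ) (hθ : θ ∈ Set.Icc (0 : ℝ) 1) (hh : 0 < h) (b : Fin d → ℝ) :
    (let sqrtV : Matrix (Fin d) (Fin d) ℝ := hV.posSemidef.sqrt
     let B : Matrix (Fin d) (Fin d) ℝ := sqrtV * A * sqrtV
     let W : Matrix (Fin d) (Fin d) ℝ := 1 + ((θ - 1/2) * (h/2)) • B
     let Wt : Matrix (Fin d) (Fin d) ℝ := 1 + ((θ - 1/2) * (h/2)) • (A * V)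
     ∀ _ : IsUnit (1 + (θ * h / 2) • B).det,
     ∀ _ : IsUnit W.det,
     (let M : Matrix (Fin d) (Fin d) ℝ :=
        (2 / h) • (sqrtV⁻¹ * (W * (1 + (θ * h / 2) • B)) * sqrtV⁻¹)
      let N : Matrix (Fin d) (Fin d) ℝ :=
        (2 / h) • (sqrtV⁻¹ * (W * (1 - ((1 - θ) * h / 2) • B)) * sqrtV⁻¹)
      let 𝒜 : Matrix (Fin d) (Fin d) ℝ := sqrtV⁻¹ * (W * B) * sqrtV⁻¹
      let β : Fin d → ℝ := (sqrtV⁻¹ * (W * sqrtV)) *ᵥ b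
      let G : Matrix (Fin d) (Fin d) ℝ :=
        (1 + (θ * h / 2) • (V * A))⁻¹ * (1 - ((1 - θ) * h / 2) • (V * A))
      let Sig : Matrix (Fin d) (Fin d) ℝ :=
        h • ((1 + (θ * h / 2) • (V * A))⁻¹ * V * (1 + (θ * h / 2) • (A * V))⁻¹)
      M - N = 𝒜 ∧
      𝒜 = Wt * A ∧
      β = Wt *ᵥ b ∧
      IsUnit M.det ∧
      M⁻¹ * N = G ∧
      M⁻¹ *ᵥ β = (h / 2) • ((1 + (θ * h / 2) • (V * A))⁻¹ *ᵥ (V *ᵥ b)) ∧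
      M⁻¹ * (Mᵀ + N) * M⁻¹ᵀ = Sig ∧
      (G * Sig).IsSymm)) :=
  general_langevin_matrix_splitting_general A V hA hV θ h hh b
end

section
/- Given d×d symmetric positive definite matrices A and V, step size h > 0 and L ∈ ℕ, define the 2d×2d block matrices K = [[I−(h²/2)VA, hV],[−hA+(h³/4)AVA, I−(h²/2)AV]] and J = [[2I, hV],[−(h/2)A, 2I−(h²/2)AV]], and write (K^L)_{ij} for the (i,j) d×d block of K^L. Assume (K^L)_{12} and I + (K^L)_{11} are invertible and set Σ = (K^L)_{12}V⁻¹(K^L)_{12}ᵀ. Then: (1) the matrix (K^L)_{11}Σ is symmetric; (2) M = Σ⁻¹(I+(K^L)_{11}) and N = Σ⁻¹(I+(K^L)_{11})(K^L)_{11} are symmetric matrices satisfying M − N = Σ⁻¹(I − (K^L)_{11}²), M⁻¹N = (K^L)_{11}, and M⁻¹(Mᵀ+N)M⁻ᵀ = Σ. -/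
open Matrix

namespace HMCaux

variable {d : ℕ}

/-- The leap-frog one-step matrix. -/
noncomputable def Kmat (A V : Matrix (Fin d) (Fin d) ℝ) (h : ℝ) :
    Matrix (Fin d ⊕ Fin d) (Fin d ⊕ Fin d) ℝ :=
  fromBlocks (1 - (h ^ 2 / 2) • (V * A)) (h • V)
    (-(h • A) + (h ^ 3 / 4) • (A * V * A)) (1 - (h ^ 2 / 2) • (A * V))

variable (A V : Matrix (Fin d) (Fin d) ℝ) (h : ℝ)

/-- Reversibility-symplecticity combined: `U K = Kᵀ U` with `U = [[0,-I],[-I,0]]`. -/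
lemma baseU (hA : Aᵀ = A) (hV : Vᵀ = V) :
    (fromBlocks 0 (-1) (-1) 0 : Matrix (Fin d ⊕ Fin d) (Fin d ⊕ Fin d) ℝ) * Kmat A V h
      = (Kmat A V h)ᵀ * fromBlocks 0 (-1) (-1) 0 := by
  rw [Kmat, fromBlocks_transpose, fromBlocks_multiply, fromBlocks_multiply]
  refine fromBlocks_inj.mpr ⟨?_, ?_, ?_, ?_⟩ <;>
  · simp only [transpose_sub, transpose_smul, transpose_mul, transpose_one, transpose_neg,
      transpose_add, hA, hV, Matrix.zero_mul, Matrix.mul_zero, Matrix.neg_mul, Matrix.mul_neg,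
      Matrix.one_mul, Matrix.mul_one, zero_add, add_zero, Matrix.mul_assoc]
    try rfl

/-- Conservation of the modified energy: `K W = W Kᵀ` with `W = diag(V, -(A - h²/4·AVA))`. -/
lemma baseW (hA : Aᵀ = A) (hV : Vᵀ = V) :
    Kmat A V h * fromBlocks V 0 0 (-(A - (h ^ 2 / 4) • (A * V * A)))
      = fromBlocks V 0 0 (-(A - (h ^ 2 / 4) • (A * V * A))) * (Kmat A V h)ᵀ := by
  rw [Kmat, fromBlocks_transpose, fromBlocks_multiply, fromBlocks_multiply]
  refine fromBlocks_inj.mpr ⟨?_, ?_, ?_, ?_⟩ <;>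
  · simp only [transpose_sub, transpose_smul, transpose_mul, transpose_one, transpose_neg,
      transpose_add, hA, hV, Matrix.zero_mul, Matrix.mul_zero, Matrix.neg_mul, Matrix.mul_neg,
      Matrix.one_mul, Matrix.mul_one, zero_add, add_zero, sub_mul, mul_sub, add_mul, mul_add,
      smul_mul_assoc, mul_smul_comm, smul_smul, Matrix.mul_assoc, neg_sub, neg_neg]
    try module

/-- Symplecticity: `K J Kᵀ = J` with `J = [[0,I],[-I,0]]`. -/
lemma baseJ (hA : Aᵀ = A) (hV : Vᵀ = V) :
    Kmat A V h * (fromBlocks 0 1 (-1) 0 : Matrix (Fin d ⊕ Fin d) (Fin d ⊕ Fin d) ℝ)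
      * (Kmat A V h)ᵀ = fromBlocks 0 1 (-1) 0 := by
  rw [Kmat, fromBlocks_transpose, fromBlocks_multiply, fromBlocks_multiply]
  refine fromBlocks_inj.mpr ⟨?_, ?_, ?_, ?_⟩ <;>
  · simp only [transpose_sub, transpose_smul, transpose_mul, transpose_one, transpose_neg,
      transpose_add, hA, hV, Matrix.zero_mul, Matrix.mul_zero, Matrix.neg_mul, Matrix.mul_neg,
      Matrix.one_mul, Matrix.mul_one, zero_add, add_zero, sub_mul, mul_sub, add_mul, mul_add,
      smul_mul_assoc, mul_smul_comm, smul_smul, Matrix.mul_assoc, neg_sub, neg_neg]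
    try module

variable (K U W J : Matrix (Fin d ⊕ Fin d) (Fin d ⊕ Fin d) ℝ)

lemma powU (hU : U * K = Kᵀ * U) (L : ℕ) : U * K ^ L = (K ^ L)ᵀ * U := by
  induction L with
  | zero => simp
  | succ n ih =>
      calc U * K ^ (n + 1) = (U * K ^ n) * K := by rw [pow_succ, Matrix.mul_assoc]
      _ = (K ^ n)ᵀ * (U * K) := by rw [ih, Matrix.mul_assoc]
      _ = ((K ^ n)ᵀ * Kᵀ) * U := by rw [hU, Matrix.mul_assoc]
      _ = (K ^ (n + 1))ᵀ * U := by rw [← transpose_mul, ← pow_succ']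

lemma powW (hW : K * W = W * Kᵀ) (L : ℕ) : K ^ L * W = W * (K ^ L)ᵀ := by
  induction L with
  | zero => simp
  | succ n ih =>
      calc K ^ (n + 1) * W = K ^ n * (K * W) := by rw [pow_succ, Matrix.mul_assoc]
      _ = (K ^ n * W) * Kᵀ := by rw [hW, Matrix.mul_assoc]
      _ = W * ((K ^ n)ᵀ * Kᵀ) := by rw [ih, Matrix.mul_assoc]
      _ = W * (K ^ (n + 1))ᵀ := by rw [← transpose_mul, ← pow_succ']

lemma powJ (hJ : K * J * Kᵀ = J) (L : ℕ) : K ^ L * J * (K ^ L)ᵀ = J := by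
  induction L with
  | zero => simp
  | succ n ih =>
      have hs : K ^ (n + 1) = K * K ^ n := by rw [pow_succ']
      rw [hs, transpose_mul]
      calc K * K ^ n * J * ((K ^ n)ᵀ * Kᵀ)
          = K * (K ^ n * J * (K ^ n)ᵀ) * Kᵀ := by simp only [Matrix.mul_assoc]
      _ = J := by rw [ih, hJ]

variable (B : Matrix (Fin d ⊕ Fin d) (Fin d ⊕ Fin d) ℝ)

lemma extrU (hU : (fromBlocks 0 (-1) (-1) 0 : Matrix (Fin d ⊕ Fin d) (Fin d ⊕ Fin d) ℝ) * B
    = Bᵀ * fromBlocks 0 (-1) (-1) 0) : B.toBlocks₁₂ᵀ = B.toBlocks₁₂ := by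
  rw [← fromBlocks_toBlocks B, fromBlocks_transpose, fromBlocks_multiply, fromBlocks_multiply,
    fromBlocks_inj] at hU
  have h4 := hU.2.2.2
  simp only [Matrix.zero_mul, Matrix.mul_zero, Matrix.neg_mul, Matrix.mul_neg, Matrix.one_mul,
    Matrix.mul_one, zero_add, add_zero, neg_inj] at h4
  exact h4.symm

lemma extrW (hW : B * (fromBlocks V 0 0 A) = (fromBlocks V 0 0 A) * Bᵀ) :
    B.toBlocks₁₁ * V = V * B.toBlocks₁₁ᵀ := by
  rw [← fromBlocks_toBlocks B, fromBlocks_transpose, fromBlocks_multiply, fromBlocks_multiply,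
    fromBlocks_inj] at hW
  have h1 := hW.1
  simpa only [Matrix.zero_mul, Matrix.mul_zero, zero_add, add_zero] using h1

lemma extrJ (hJ : B * (fromBlocks 0 1 (-1) 0 : Matrix (Fin d ⊕ Fin d) (Fin d ⊕ Fin d) ℝ) * Bᵀ
    = fromBlocks 0 1 (-1) 0) :
    B.toBlocks₁₁ * B.toBlocks₁₂ᵀ = B.toBlocks₁₂ * B.toBlocks₁₁ᵀ := by
  rw [← fromBlocks_toBlocks B, fromBlocks_transpose, fromBlocks_multiply, fromBlocks_multiply,
    fromBlocks_inj] at hJ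
  have h1 := hJ.1
  simp only [Matrix.zero_mul, Matrix.mul_zero, Matrix.neg_mul, Matrix.mul_neg, Matrix.one_mul,
    Matrix.mul_one, zero_add, add_zero] at h1
  linear_combination (norm := noncomm_ring) h1

/-- If `X P = P Y` and `P` is invertible then `P⁻¹ X = Y P⁻¹`. -/
lemma inv_conj {n : Type*} [Fintype n] [DecidableEq n] (X Y P : Matrix n n ℝ)
    (hP : IsUnit P.det) (hxy : X * P = P * Y) : P⁻¹ * X = Y * P⁻¹ := by
  calc P⁻¹ * X = P⁻¹ * X * (P * P⁻¹) := by rw [mul_nonsing_inv _ hP, Matrix.mul_one]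
  _ = P⁻¹ * (X * P) * P⁻¹ := by simp only [Matrix.mul_assoc]
  _ = P⁻¹ * (P * Y) * P⁻¹ := by rw [hxy]
  _ = (P⁻¹ * P) * (Y * P⁻¹) := by simp only [Matrix.mul_assoc]
  _ = Y * P⁻¹ := by rw [nonsing_inv_mul _ hP, Matrix.one_mul]

end HMCaux

/-- (Theorem: the HMC proposal corresponds to a matrix splitting.)
With `K` the leap-frog block matrix and `Σ = (K^L)₁₂ V⁻¹ (K^L)₁₂ᵀ`:
(1) `(K^L)₁₁ Σ` is symmetric; (2) `M = Σ⁻¹(I + (K^L)₁₁)` and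
`N = Σ⁻¹(I + (K^L)₁₁)(K^L)₁₁` are symmetric and satisfy
`M - N = Σ⁻¹(I - (K^L)₁₁²)`, `M⁻¹N = (K^L)₁₁` and `M⁻¹(Mᵀ + N)M⁻ᵀ = Σ`. -/
theorem hmc_matrix_splitting
    {d : ℕ} (A V : Matrix (Fin d) (Fin d) ℝ) (hA : A.PosDef) (hV : V.PosDef)
    (h : ℝ) (hh : 0 < h) (L : ℕ) :
    (let K : Matrix (Fin d ⊕ Fin d) (Fin d ⊕ Fin d) ℝ :=
      fromBlocks (1 - (h ^ 2 / 2) • (V * A)) (h • V)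
        (-(h • A) + (h ^ 3 / 4) • (A * V * A)) (1 - (h ^ 2 / 2) • (A * V))
     let K11 : Matrix (Fin d) (Fin d) ℝ := (K ^ L).toBlocks₁₁
     let K12 : Matrix (Fin d) (Fin d) ℝ := (K ^ L).toBlocks₁₂
     ∀ _ : IsUnit K12.det,
     ∀ _ : IsUnit (1 + K11).det,
     (let Sig : Matrix (Fin d) (Fin d) ℝ := K12 * V⁻¹ * K12ᵀ
      let M : Matrix (Fin d) (Fin d) ℝ := Sig⁻¹ * (1 + K11)
      let N : Matrix (Fin d) (Fin d) ℝ := Sig⁻¹ * (1 + K11) * K11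
      (K11 * Sig).IsSymm ∧
      M.IsSymm ∧ N.IsSymm ∧
      M - N = Sig⁻¹ * (1 - K11 ^ 2) ∧
      M⁻¹ * N = K11 ∧
      M⁻¹ * (Mᵀ + N) * M⁻¹ᵀ = Sig)) := by
  have hA' : Aᵀ = A := by rw [← conjTranspose_eq_transpose_of_trivial]; exact hA.1
  have hV' : Vᵀ = V := by rw [← conjTranspose_eq_transpose_of_trivial]; exact hV.1
  have hVdet : IsUnit V.det := hV.det_pos.ne'.isUnit
  intro K K11 K12 h12 h1 Sig M N
  have hK : K = HMCaux.Kmat A V h := rfl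
  -- extracted block identities for B = K ^ L
  have eS : K12ᵀ = K12 := by
    refine HMCaux.extrU (K ^ L) (HMCaux.powU _ _ ?_ L)
    rw [hK]; exact HMCaux.baseU A V h hA' hV'
  have eCV : K11 * V = V * K11ᵀ := by
    refine HMCaux.extrW (-(A - (h ^ 2 / 4) • (A * V * A))) V (K ^ L) (HMCaux.powW _ _ ?_ L)
    rw [hK]; exact HMCaux.baseW A V h hA' hV'
  have eCS : K11 * K12ᵀ = K12 * K11ᵀ := by
    refine HMCaux.extrJ (K ^ L) (HMCaux.powJ _ _ ?_ L)
    rw [hK]; exact HMCaux.baseJ A V h hA' hV'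
  -- basic facts about V⁻¹ and Sig
  have hVi : V⁻¹ᵀ = V⁻¹ := by rw [transpose_nonsing_inv, hV']
  have hCV' : K11ᵀ * V⁻¹ = V⁻¹ * K11 :=
    (HMCaux.inv_conj K11 K11ᵀ V hVdet eCV).symm
  have e1 : K11 * K12 = K12 * K11ᵀ := by
    conv_lhs => rw [← eS]
    exact eCS
  have key1 : K11 * Sig = Sig * K11ᵀ := by
    show K11 * (K12 * V⁻¹ * K12ᵀ) = K12 * V⁻¹ * K12ᵀ * K11ᵀ
    calc K11 * (K12 * V⁻¹ * K12ᵀ) = (K11 * K12) * V⁻¹ * K12ᵀ := by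
          simp only [Matrix.mul_assoc]
    _ = (K12 * K11ᵀ) * V⁻¹ * K12ᵀ := by rw [e1]
    _ = K12 * ((K11ᵀ * V⁻¹) * K12ᵀ) := by simp only [Matrix.mul_assoc]
    _ = K12 * ((V⁻¹ * K11) * K12ᵀ) := by rw [hCV']
    _ = K12 * V⁻¹ * (K11 * K12ᵀ) := by simp only [Matrix.mul_assoc]
    _ = K12 * V⁻¹ * (K12 * K11ᵀ) := by rw [eCS]
    _ = K12 * V⁻¹ * K12ᵀ * K11ᵀ := by rw [eS]; simp only [Matrix.mul_assoc]
  have hSigT : Sigᵀ = Sig := by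
    show (K12 * V⁻¹ * K12ᵀ)ᵀ = K12 * V⁻¹ * K12ᵀ
    simp only [transpose_mul, transpose_transpose, hVi, Matrix.mul_assoc]
  have hSigdet : IsUnit Sig.det := by
    show IsUnit (K12 * V⁻¹ * K12ᵀ).det
    rw [det_mul, det_mul, det_transpose]
    exact (h12.mul (V.isUnit_nonsing_inv_det hVdet)).mul h12
  have key1' : K11ᵀ * Sig⁻¹ = Sig⁻¹ * K11 :=
    (HMCaux.inv_conj K11 K11ᵀ Sig hSigdet key1).symm
  have hSigr : Sig * Sig⁻¹ = 1 := mul_nonsing_inv _ hSigdet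
  have hCl : (1 + K11)⁻¹ * (1 + K11) = 1 := nonsing_inv_mul _ h1
  have hCr : (1 + K11) * (1 + K11)⁻¹ = 1 := mul_nonsing_inv _ h1
  -- the six goals
  have goal1 : (K11 * Sig).IsSymm := by
    show (K11 * Sig)ᵀ = K11 * Sig
    rw [transpose_mul, hSigT, ← key1]
  have goal2 : Mᵀ = M := by
    show (Sig⁻¹ * (1 + K11))ᵀ = Sig⁻¹ * (1 + K11)
    rw [transpose_mul, transpose_add, transpose_one, transpose_nonsing_inv, hSigT,
      add_mul, Matrix.mul_add, Matrix.one_mul, Matrix.mul_one, key1']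
  have hNdef : N = M * K11 := rfl
  have step3 : K11ᵀ * M = M * K11 := by
    show K11ᵀ * (Sig⁻¹ * (1 + K11)) = Sig⁻¹ * (1 + K11) * K11
    rw [← Matrix.mul_assoc, key1']
    noncomm_ring
  have goal3 : Nᵀ = N := by
    calc Nᵀ = K11ᵀ * Mᵀ := by rw [hNdef, transpose_mul]
    _ = K11ᵀ * M := by rw [goal2]
    _ = M * K11 := step3
    _ = N := hNdef.symm
  have hMinv : M⁻¹ = (1 + K11)⁻¹ * Sig := by
    show (Sig⁻¹ * (1 + K11))⁻¹ = (1 + K11)⁻¹ * Sig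
    rw [Matrix.mul_inv_rev, nonsing_inv_nonsing_inv _ hSigdet]
  have goal5 : M⁻¹ * N = K11 := by
    rw [hMinv, hNdef]
    show (1 + K11)⁻¹ * Sig * (Sig⁻¹ * (1 + K11) * K11) = K11
    calc (1 + K11)⁻¹ * Sig * (Sig⁻¹ * (1 + K11) * K11)
        = (1 + K11)⁻¹ * (Sig * Sig⁻¹) * (1 + K11) * K11 := by simp only [Matrix.mul_assoc]
    _ = K11 := by rw [hSigr, Matrix.mul_one, hCl, Matrix.one_mul]
  have hMdet : IsUnit M.det := by
    have hMd : M.det = Sig⁻¹.det * (1 + K11).det := by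
      show (Sig⁻¹ * (1 + K11)).det = Sig⁻¹.det * (1 + K11).det
      exact det_mul _ _
    rw [hMd]
    exact (Sig.isUnit_nonsing_inv_det hSigdet).mul h1
  have hMl : M⁻¹ * M = 1 := nonsing_inv_mul _ hMdet
  have goal6 : M⁻¹ * (Mᵀ + N) * M⁻¹ᵀ = Sig := by
    rw [goal2, transpose_nonsing_inv, goal2, Matrix.mul_add, hMl, goal5, hMinv,
      ← Matrix.mul_assoc, hCr, Matrix.one_mul]
  refine ⟨goal1, goal2, goal3, ?_, goal5, goal6⟩
  show Sig⁻¹ * (1 + K11) - Sig⁻¹ * (1 + K11) * K11 = Sig⁻¹ * (1 - K11 ^ 2)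
  noncomm_ring
end

section
/- Given d×d symmetric positive definite matrices A and V, b ∈ ℝ^d, step size h > 0 and L ∈ ℕ, define the 2d×2d block matrices K = [[I−(h²/2)VA, hV],[−hA+(h³/4)AVA, I−(h²/2)AV]] and J = [[2I, hV],[−(h/2)A, 2I−(h²/2)AV]], and assume I − K is invertible; set S = (I−K)⁻¹(I−K^L). Then (I − (K^L)_{11}) A⁻¹ b equals the vector of first d components of S J (0, (h/2)b)ᵀ, where (K^L)_{11} is the upper-left d×d block of K^L. Equivalently, the HMC matrix splitting satisfies 𝒜⁻¹β = A⁻¹b: the mean of the proposal target distribution equals the mean A⁻¹b of the target distribution. -/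
open Matrix

/-- (Corollary: the HMC proposal targets the correct mean.)
With `K, J` the leap-frog block matrices, `I - K` invertible and
`S = (I-K)⁻¹(I-K^L)`, one has
`(I - (K^L)₁₁) A⁻¹ b = ((S J) *ᵥ (0, (h/2)b))₁` (the first `d` components),
i.e. the HMC matrix splitting satisfies `𝒜⁻¹β = A⁻¹b`. -/
theorem hmc_proposal_mean
    {d : ℕ} (A V : Matrix (Fin d) (Fin d) ℝ) (hA : A.PosDef) (hV : V.PosDef)
    (b : Fin d → ℝ) (h : ℝ) (hh : 0 < h) (L : ℕ) :
    (let K : Matrix (Fin d ⊕ Fin d) (Fin d ⊕ Fin d) ℝ :=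
      fromBlocks (1 - (h ^ 2 / 2) • (V * A)) (h • V)
        (-(h • A) + (h ^ 3 / 4) • (A * V * A)) (1 - (h ^ 2 / 2) • (A * V))
     let J : Matrix (Fin d ⊕ Fin d) (Fin d ⊕ Fin d) ℝ :=
      fromBlocks (2 : Matrix (Fin d) (Fin d) ℝ) (h • V)
        (-((h / 2) • A)) ((2 : Matrix (Fin d) (Fin d) ℝ) - (h ^ 2 / 2) • (A * V))
     ∀ _ : IsUnit (1 - K).det,
     (let S : Matrix (Fin d ⊕ Fin d) (Fin d ⊕ Fin d) ℝ := (1 - K)⁻¹ * (1 - K ^ L)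
      (1 - (K ^ L).toBlocks₁₁) *ᵥ (A⁻¹ *ᵥ b)
        = fun i : Fin d =>
            ((S * J) *ᵥ Sum.elim (0 : Fin d → ℝ) ((h / 2) • b)) (Sum.inl i))) := by
  intro K J hIK S
  have hAdet : IsUnit A.det := isUnit_iff_ne_zero.mpr hA.det_pos.ne'
  have hAinv : A * A⁻¹ = 1 := Matrix.mul_nonsing_inv A hAdet
  have hb : A *ᵥ (A⁻¹ *ᵥ b) = b := by
    rw [Matrix.mulVec_mulVec, hAinv, Matrix.one_mulVec]
  set x : Fin d → ℝ := A⁻¹ *ᵥ b with hx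
  have h1K : (1 - K) = fromBlocks ((h ^ 2 / 2) • (V * A)) (-(h • V))
      (h • A - (h ^ 3 / 4) • (A * V * A)) ((h ^ 2 / 2) • (A * V)) := by
    rw [show (1 : Matrix (Fin d ⊕ Fin d) (Fin d ⊕ Fin d) ℝ) = fromBlocks 1 0 0 1 from
      (fromBlocks_one).symm]
    show fromBlocks 1 0 0 1 - fromBlocks _ _ _ _ = _
    ext (i | i) (j | j) <;>
      simp [fromBlocks, Matrix.sub_apply, Matrix.neg_apply] <;> ring
  have h2mul : ∀ v : Fin d → ℝ, (2 : Matrix (Fin d) (Fin d) ℝ) *ᵥ v = v + v := by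
    intro v
    rw [show (2 : Matrix (Fin d) (Fin d) ℝ) = 1 + 1 from one_add_one_eq_two.symm,
      Matrix.add_mulVec, Matrix.one_mulVec]
  have hVab : (V * A) *ᵥ x = V *ᵥ b := by
    rw [← Matrix.mulVec_mulVec, hb]
  have hAVab : (A * V * A) *ᵥ x = (A * V) *ᵥ b := by
    rw [← Matrix.mulVec_mulVec, hb]
  -- key vector identity
  have key : J *ᵥ Sum.elim (0 : Fin d → ℝ) ((h / 2) • b)
      = (1 - K) *ᵥ Sum.elim x (0 : Fin d → ℝ) := by
    rw [h1K]
    show fromBlocks _ _ _ _ *ᵥ _ = fromBlocks _ _ _ _ *ᵥ _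
    rw [fromBlocks_mulVec, fromBlocks_mulVec]
    funext i
    cases i with
    | inl i =>
      simp [Matrix.smul_mulVec, Matrix.mulVec_smul, hVab, h2mul]
      ring
    | inr i =>
      simp [Matrix.sub_mulVec, Matrix.smul_mulVec, Matrix.mulVec_smul, hVab, hAVab,
        hb, h2mul]
      ring
  have hc : (1 - K ^ L) * (1 - K) = (1 - K) * (1 - K ^ L) := by
    have : Commute (1 - K) (1 - K ^ L) :=
      ((Commute.one_left (1 - K ^ L))).sub_left
        (((Commute.one_right K).sub_right ((Commute.refl K).pow_right L)))
    exact this.symm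
  have hSJ : (S * J) *ᵥ Sum.elim (0 : Fin d → ℝ) ((h / 2) • b)
      = (1 - K ^ L) *ᵥ Sum.elim x (0 : Fin d → ℝ) := by
    have hmat : S * (1 - K) = 1 - K ^ L := by
      calc S * (1 - K) = (1 - K)⁻¹ * ((1 - K ^ L) * (1 - K)) := Matrix.mul_assoc _ _ _
      _ = (1 - K)⁻¹ * ((1 - K) * (1 - K ^ L)) := by rw [hc]
      _ = (1 - K)⁻¹ * (1 - K) * (1 - K ^ L) := (Matrix.mul_assoc _ _ _).symm
      _ = 1 - K ^ L := by rw [Matrix.nonsing_inv_mul _ hIK, Matrix.one_mul]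
    rw [← Matrix.mulVec_mulVec, key, Matrix.mulVec_mulVec, hmat]
  funext i
  rw [hSJ]
  have hKL : (K ^ L) = fromBlocks (K ^ L).toBlocks₁₁ (K ^ L).toBlocks₁₂
      (K ^ L).toBlocks₂₁ (K ^ L).toBlocks₂₂ := (fromBlocks_toBlocks _).symm
  conv_rhs => rw [hKL]
  rw [Matrix.sub_mulVec, Matrix.sub_mulVec, fromBlocks_mulVec]
  simp
end

section
/- Let A and V be d×d symmetric positive definite matrices, h > 0 and L ∈ ℕ, and let λ₁², …, λ_d² be the eigenvalues of VA; assume 0 < h²λ_i² < 4 for all i. Define the 2d×2d block matrix K = [[I−(h²/2)VA, hV],[−hA+(h³/4)AVA, I−(h²/2)AV]]. Then the upper-left d×d block (K^L)_{11} of K^L has eigenvalues cos(Lθ_i), i = 1,…,d, where θ_i = −arccos(1 − (h²/2)λ_i²); that is, (K^L)_{11} is similar to the diagonal matrix diag(cos(Lθ₁),…,cos(Lθ_d)). -/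
open Matrix Real

/-- Power of a 2×2 block matrix of diagonal blocks with "rotation" structure. -/
lemma pow_fromBlocks_diag {d : ℕ} (c b e s θ : Fin d → ℝ)
    (hc : ∀ i, c i = Real.cos (θ i)) (hs : ∀ i, s i = Real.sin (θ i))
    (hs0 : ∀ i, s i ≠ 0) (hbe : ∀ i, b i * e i = -(s i) ^ 2) (L : ℕ) :
    (fromBlocks (diagonal c) (diagonal b) (diagonal e) (diagonal c) :
        Matrix (Fin d ⊕ Fin d) (Fin d ⊕ Fin d) ℝ) ^ L =
      fromBlocks (diagonal fun i => Real.cos (L * θ i))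
        (diagonal fun i => Real.sin (L * θ i) * b i / s i)
        (diagonal fun i => Real.sin (L * θ i) * e i / s i)
        (diagonal fun i => Real.cos (L * θ i)) := by
  induction L with
  | zero =>
      simp only [pow_zero, Nat.cast_zero, zero_mul, Real.cos_zero, Real.sin_zero, zero_mul,
        zero_div, diagonal_zero]
      rw [← fromBlocks_one]
      congr 1
  | succ L ih =>
      have key : ∀ i, Real.sin (θ i) ≠ 0 ∧ b i * e i = -Real.sin (θ i) ^ 2 := by
        intro i
        refine ⟨hs i ▸ hs0 i, ?_⟩
        rw [← hs i]; exact hbe i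
      rw [pow_succ, ih, fromBlocks_multiply, fromBlocks_inj]
      refine ⟨?_, ?_, ?_, ?_⟩ <;>
        rw [diagonal_mul_diagonal, diagonal_mul_diagonal, diagonal_add] <;>
        refine congrArg Matrix.diagonal (funext fun i => ?_) <;>
        obtain ⟨hsi, h1⟩ := key i <;>
        push_cast <;>
        rw [add_mul, one_mul]
      · rw [Real.cos_add, hc i, hs i]
        field_simp
        linear_combination Real.sin (↑L * θ i) * h1
      · rw [Real.sin_add, hc i, hs i]
        field_simp
        ring
      · rw [Real.sin_add, hc i, hs i]
        field_simp
      · rw [Real.cos_add, hc i, hs i]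
        field_simp
        linear_combination Real.sin (↑L * θ i) * h1


set_option maxHeartbeats 1000000 in
/-- (Theorem: eigenvalues of the HMC iteration matrix.)
If `VA` has eigenvalues `λ₁², …, λ_d²` (i.e. `VA` is similar to `diag(λ₁²,…,λ_d²)`)
with `0 < h²λ_i² < 4`, then the upper-left block `(K^L)₁₁` of the `L`-th power of the
leap-frog matrix `K` is similar to `diag(cos(Lθ₁),…,cos(Lθ_d))` with
`θ_i = -arccos(1 - (h²/2)λ_i²)`; in particular its eigenvalues are `cos(Lθ_i)`. -/
theorem hmc_iteration_matrix_eigenvalues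
    {d : ℕ} (A V : Matrix (Fin d) (Fin d) ℝ) (hA : A.PosDef) (hV : V.PosDef)
    (h : ℝ) (hh : 0 < h) (L : ℕ)
    (lam : Fin d → ℝ)
    (hlam : ∀ i, 0 < h ^ 2 * (lam i) ^ 2 ∧ h ^ 2 * (lam i) ^ 2 < 4)
    (P : Matrix (Fin d) (Fin d) ℝ) (hP : IsUnit P.det)
    (hsim : V * A = P * diagonal (fun i => (lam i) ^ 2) * P⁻¹) :
    (let K : Matrix (Fin d ⊕ Fin d) (Fin d ⊕ Fin d) ℝ :=
      fromBlocks (1 - (h ^ 2 / 2) • (V * A)) (h • V)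
        (-(h • A) + (h ^ 3 / 4) • (A * V * A)) (1 - (h ^ 2 / 2) • (A * V))
     let θ : Fin d → ℝ := fun i => -Real.arccos (1 - h ^ 2 / 2 * (lam i) ^ 2)
     ∃ P' : Matrix (Fin d) (Fin d) ℝ, IsUnit P'.det ∧
       (K ^ L).toBlocks₁₁ = P' * diagonal (fun i => Real.cos (L * θ i)) * P'⁻¹) := by
  intro K θ
  refine ⟨P, hP, ?_⟩
  -- scalar data
  set c : Fin d → ℝ := fun i => 1 - h ^ 2 / 2 * (lam i) ^ 2 with hcdef
  set b : Fin d → ℝ := fun i => h * (lam i) ^ 2 with hbdef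
  set e : Fin d → ℝ := fun i => -h + h ^ 3 / 4 * (lam i) ^ 2 with hedef
  set s : Fin d → ℝ := fun i => Real.sin (θ i) with hsdef
  have hc1 : ∀ i, -1 < c i ∧ c i < 1 := by
    intro i
    obtain ⟨h1, h2⟩ := hlam i
    constructor <;> simp only [hcdef] <;> nlinarith
  have hc : ∀ i, c i = Real.cos (θ i) := by
    intro i
    obtain ⟨h1, h2⟩ := hc1 i
    simp only [θ, Real.cos_neg]
    rw [Real.cos_arccos h1.le h2.le]
  have hs0 : ∀ i, s i ≠ 0 := by
    intro i
    obtain ⟨h1, h2⟩ := hc1 i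
    have h1' : -1 < 1 - h ^ 2 / 2 * (lam i) ^ 2 := h1
    have h2' : 1 - h ^ 2 / 2 * (lam i) ^ 2 < 1 := h2
    simp only [hsdef, θ, Real.sin_neg, Real.sin_arccos, neg_ne_zero]
    exact ne_of_gt (Real.sqrt_pos.mpr (by nlinarith))
  have hbe : ∀ i, b i * e i = -(s i) ^ 2 := by
    intro i
    have hsq : (s i) ^ 2 = 1 - (c i) ^ 2 := by
      have := Real.sin_sq_add_cos_sq (θ i)
      rw [← hc i] at this
      linarith [this]
    rw [hsq]
    simp only [hbdef, hcdef, hedef]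
    ring
  -- matrices
  have hAdet : IsUnit A.det := isUnit_iff_ne_zero.mpr hA.det_pos.ne'
  have hPP : P * P⁻¹ = 1 := mul_nonsing_inv P hP
  have hPP' : P⁻¹ * P = 1 := nonsing_inv_mul P hP
  have hAA : A * A⁻¹ = 1 := mul_nonsing_inv A hAdet
  have hAA' : A⁻¹ * A = 1 := nonsing_inv_mul A hAdet
  have hD : P * diagonal (fun i => (lam i) ^ 2) * P⁻¹ = V * A := hsim.symm
  have hV' : P * diagonal (fun i => (lam i) ^ 2) * (P⁻¹ * A⁻¹) = V := by
    rw [← Matrix.mul_assoc, hD, Matrix.mul_assoc, hAA, Matrix.mul_one]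
  set Q : Matrix (Fin d ⊕ Fin d) (Fin d ⊕ Fin d) ℝ :=
    fromBlocks P 0 0 (A * P) with hQdef
  set Q' : Matrix (Fin d ⊕ Fin d) (Fin d ⊕ Fin d) ℝ :=
    fromBlocks P⁻¹ 0 0 (P⁻¹ * A⁻¹) with hQ'def
  have hQ'Q : Q' * Q = 1 := by
    rw [hQdef, hQ'def, fromBlocks_multiply]
    simp only [Matrix.mul_zero, Matrix.zero_mul, add_zero, zero_add, hPP']
    have h22 : P⁻¹ * A⁻¹ * (A * P) = 1 := by
      rw [Matrix.mul_assoc, ← Matrix.mul_assoc A⁻¹, hAA', Matrix.one_mul, hPP']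
    rw [h22, fromBlocks_one]
  set M : Matrix (Fin d ⊕ Fin d) (Fin d ⊕ Fin d) ℝ :=
    fromBlocks (diagonal c) (diagonal b) (diagonal e) (diagonal c) with hMdef
  -- K = Q * M * Q'
  have hK : K = Q * M * Q' := by
    rw [hQdef, hQ'def, hMdef, fromBlocks_multiply, fromBlocks_multiply]
    simp only [Matrix.zero_mul, Matrix.mul_zero, add_zero, zero_add]
    have hdc : diagonal c = 1 - (h ^ 2 / 2) • diagonal (fun i => (lam i) ^ 2) := by
      rw [← diagonal_one, ← diagonal_smul, diagonal_sub]
      rfl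
    have hdb : diagonal b = h • diagonal (fun i => (lam i) ^ 2) := by
      rw [← diagonal_smul]; rfl
    have hde : diagonal e = -(h • (1 : Matrix (Fin d) (Fin d) ℝ))
        + (h ^ 3 / 4) • diagonal (fun i => (lam i) ^ 2) := by
      rw [← diagonal_one, ← diagonal_smul, ← diagonal_smul, diagonal_neg, diagonal_add]
      refine congrArg Matrix.diagonal (funext fun i => ?_)
      simp only [hedef, Pi.smul_apply, Pi.neg_apply, smul_eq_mul, mul_one]
    show K = fromBlocks _ _ _ _
    rw [hdc, hdb, hde]
    have e11 : P * (1 - (h ^ 2 / 2) • diagonal (fun i => (lam i) ^ 2)) * P⁻¹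
        = 1 - (h ^ 2 / 2) • (V * A) := by
      rw [Matrix.mul_sub, Matrix.sub_mul, Matrix.mul_one, hPP, Matrix.mul_smul,
        Matrix.smul_mul, hD]
    have e12 : P * (h • diagonal (fun i => (lam i) ^ 2)) * (P⁻¹ * A⁻¹) = h • V := by
      rw [Matrix.mul_smul, Matrix.smul_mul, hV']
    have e21 : A * P * (-(h • (1 : Matrix (Fin d) (Fin d) ℝ))
        + (h ^ 3 / 4) • diagonal (fun i => (lam i) ^ 2)) * P⁻¹
        = -(h • A) + (h ^ 3 / 4) • (A * V * A) := by
      rw [Matrix.mul_add, Matrix.add_mul]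
      congr 1
      · rw [Matrix.mul_neg, Matrix.neg_mul, Matrix.mul_smul, Matrix.smul_mul, Matrix.mul_one,
          Matrix.mul_assoc, hPP, Matrix.mul_one]
      · rw [Matrix.mul_smul, Matrix.smul_mul]
        congr 1
        rw [Matrix.mul_assoc A P, Matrix.mul_assoc A, hD, ← Matrix.mul_assoc]
    have e22 : A * P * (1 - (h ^ 2 / 2) • diagonal (fun i => (lam i) ^ 2)) * (P⁻¹ * A⁻¹)
        = 1 - (h ^ 2 / 2) • (A * V) := by
      rw [Matrix.mul_sub, Matrix.sub_mul]
      congr 1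
      · rw [Matrix.mul_one, Matrix.mul_assoc, ← Matrix.mul_assoc P, hPP, Matrix.one_mul, hAA]
      · rw [Matrix.mul_smul, Matrix.smul_mul]
        congr 1
        rw [Matrix.mul_assoc A P, Matrix.mul_assoc A, hV']
    rw [e11, e12, e21, e22]
  -- K^L = Q * M^L * Q'
  have hKL : K ^ L = Q * M ^ L * Q' := by
    induction L with
    | zero =>
        rw [pow_zero, pow_zero, Matrix.mul_one]
        exact (mul_eq_one_comm.mp hQ'Q).symm
    | succ n ihn =>
        rw [pow_succ, pow_succ, ihn, hK]
        simp only [Matrix.mul_assoc]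
        rw [← Matrix.mul_assoc Q', hQ'Q, Matrix.one_mul]
  -- conclude
  rw [hKL, hMdef, pow_fromBlocks_diag c b e s θ hc (fun _ => rfl) hs0 hbe L]
  rw [hQdef, hQ'def, fromBlocks_multiply, fromBlocks_multiply]
  simp only [Matrix.zero_mul, Matrix.mul_zero, add_zero, zero_add, toBlocks_fromBlocks₁₁]
end

section
/- Let λ > 0 and h > 0 satisfy h²λ² < 4, and define the 2×2 matrix k = [[1−(h²/2)λ², h],[−hλ²+(h³/4)λ⁴, 1−(h²/2)λ²]], together with a = λ√(1−(h²/4)λ²) and θ = −arccos(1−(h²/2)λ²). Then k = [[1,0],[0,a]]·[[cos θ, −sin θ],[sin θ, cos θ]]·[[1,0],[0,1/a]], and consequently for every L ∈ ℕ, (k^L)_{11} = cos(Lθ) and (k^L)_{12} = −a⁻¹ sin(Lθ). -/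
open Real Matrix

/-- For `λ, h > 0` with `h²λ² < 4`, the one-dimensional leap-frog
matrix `k` factorizes as `diag(1,a) · rotation(θ) · diag(1,a⁻¹)` with
`a = λ√(1 - h²λ²/4)` and `θ = -arccos(1 - h²λ²/2)`, and consequently
`(k^L)₁₁ = cos(Lθ)` and `(k^L)₁₂ = -a⁻¹ sin(Lθ)` for every `L ∈ ℕ`. -/
theorem leapfrog_2x2_powers
    (lam h : ℝ) (hlam : 0 < lam) (hh : 0 < h) (hcond : h ^ 2 * lam ^ 2 < 4) :
    (let k : Matrix (Fin 2) (Fin 2) ℝ :=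
      !![1 - h ^ 2 / 2 * lam ^ 2, h;
         -h * lam ^ 2 + h ^ 3 / 4 * lam ^ 4, 1 - h ^ 2 / 2 * lam ^ 2]
     let a : ℝ := lam * Real.sqrt (1 - h ^ 2 / 4 * lam ^ 2)
     let θ : ℝ := -Real.arccos (1 - h ^ 2 / 2 * lam ^ 2)
     k = !![(1 : ℝ), 0; 0, a] * !![Real.cos θ, -Real.sin θ; Real.sin θ, Real.cos θ] *
           !![(1 : ℝ), 0; 0, a⁻¹] ∧
     ∀ L : ℕ, (k ^ L) 0 0 = Real.cos (L * θ) ∧ (k ^ L) 0 1 = -a⁻¹ * Real.sin (L * θ)) := by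
  intro k a θ
  have hs2 : (0:ℝ) < 1 - h ^ 2 / 4 * lam ^ 2 := by nlinarith
  have hs : (0:ℝ) < Real.sqrt (1 - h ^ 2 / 4 * lam ^ 2) := Real.sqrt_pos.mpr hs2
  have ha : 0 < a := mul_pos hlam hs
  have hane : a ≠ 0 := ha.ne'
  have hsq : Real.sqrt (1 - h ^ 2 / 4 * lam ^ 2) ^ 2 = 1 - h ^ 2 / 4 * lam ^ 2 :=
    Real.sq_sqrt hs2.le
  have ha2 : a ^ 2 = lam ^ 2 * (1 - h ^ 2 / 4 * lam ^ 2) := by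
    simp only [a, mul_pow, hsq]
  have hc1 : -1 ≤ 1 - h ^ 2 / 2 * lam ^ 2 := by nlinarith [sq_nonneg (h*lam)]
  have hc2 : 1 - h ^ 2 / 2 * lam ^ 2 ≤ 1 := by nlinarith [sq_nonneg (h*lam)]
  have hcos : Real.cos θ = 1 - h ^ 2 / 2 * lam ^ 2 := by
    simp only [θ, Real.cos_neg, Real.cos_arccos hc1 hc2]
  have hsin : Real.sin θ = -(h * a) := by
    have h1 : Real.sin (Real.arccos (1 - h ^ 2 / 2 * lam ^ 2)) =
        Real.sqrt (1 - (1 - h ^ 2 / 2 * lam ^ 2) ^ 2) := Real.sin_arccos _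
    have h2 : Real.sqrt (1 - (1 - h ^ 2 / 2 * lam ^ 2) ^ 2) = h * a := by
      rw [show 1 - (1 - h ^ 2 / 2 * lam ^ 2) ^ 2
          = (h * lam) ^ 2 * (1 - h ^ 2 / 4 * lam ^ 2) by ring,
        Real.sqrt_mul (by positivity), Real.sqrt_sq (by positivity)]
      simp only [a]; ring
    simp only [θ, Real.sin_neg, h1, h2]
  have hk1 : k = !![Real.cos θ, -a⁻¹ * Real.sin θ; a * Real.sin θ, Real.cos θ] := by
    rw [hcos, hsin]
    have e01 : -a⁻¹ * -(h * a) = h := by field_simp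
    have e10 : a * -(h * a) = -h * lam ^ 2 + h ^ 3 / 4 * lam ^ 4 := by
      have : a * -(h * a) = -h * a ^ 2 := by ring
      rw [this, ha2]; ring
    rw [e01, e10]
  clear_value a θ k
  have hkL : ∀ L : ℕ, k ^ L =
      !![Real.cos (L * θ), -a⁻¹ * Real.sin (L * θ);
         a * Real.sin (L * θ), Real.cos (L * θ)] := by
    intro L
    induction L with
    | zero => simp [Matrix.one_fin_two]
    | succ n ih =>
      rw [pow_succ, ih, hk1]
      push_cast
      rw [show ((n : ℝ) + 1) * θ = n * θ + θ by ring, Real.cos_add, Real.sin_add]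
      ext i j
      fin_cases i <;> fin_cases j <;>
        simp [Matrix.mul_apply, Fin.sum_univ_two] <;> (try field_simp) <;> (try ring)
  refine ⟨?_, fun L => by rw [hkL L]; constructor <;> simp⟩
  rw [hk1]
  ext i j
  fin_cases i <;> fin_cases j <;>
    simp [Matrix.mul_apply, Fin.sum_univ_two] <;> (try field_simp)
end
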